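/- arXiv:2510.09909 — 4 statements merged into one kernel-verified Lean document; each statement's English description precedes it below -/
import Mathlib

section
/- Let f : ℝ × ℝ → ℂ be 2π-periodic in its second argument and bandlimited of bandwidth δ, with each mode f_k bounded on [a, a+(b−a)β]. Then for every positive integer N, ‖T_N(f)‖ ≤ Σ_{|k|≤δ} sup_{z ∈ [a, a+(b−a)β]} |f_k(z)|; in particular sup_N ‖T_N(f)‖ < ∞. -/
noncomputable section

/-- The quantization parameter ħ_N = (b−a)β/N. -/
def hbar (a b β : ℝ) (N : ℕ) : ℝ := (b - a) * β / N

/-- z_N(n,m) = a + (ħ_N/2)(n+m), for 1-based indices n,m. -/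
def zN (a b β : ℝ) (N : ℕ) (n m : ℕ) : ℝ := a + hbar a b β N / 2 * (n + m)

/-- The k-th Fourier mode f_k(z) = (1/(2π)) ∫₀^{2π} f(z,θ) e^{−ikθ} dθ. -/
def fourierMode (f : ℝ × ℝ → ℂ) (k : ℤ) (z : ℝ) : ℂ :=
  (1 / (2 * Real.pi)) * ∫ θ in (0:ℝ)..(2 * Real.pi),
    f (z, θ) * Complex.exp (-(Complex.I * k * θ))

/-- The quantization map: (T_N(f))_{n,m} = f_{n−m}(z_N(n,m)), with 1-based indices. -/
def TN (a b β : ℝ) (N : ℕ) (f : ℝ × ℝ → ℂ) : Matrix (Fin N) (Fin N) ℂ :=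
  Matrix.of fun n m =>
    fourierMode f ((n.1 : ℤ) - (m.1 : ℤ)) (zN a b β N (n.1 + 1) (m.1 + 1))

/-- f is 2π-periodic in its second argument. -/
def Periodic2 (f : ℝ × ℝ → ℂ) : Prop := ∀ z θ : ℝ, f (z, θ + 2 * Real.pi) = f (z, θ)

/-- The ℓ² operator norm of an N×N complex matrix. -/
def opNorm {N : ℕ} (M : Matrix (Fin N) (Fin N) ℂ) : ℝ :=
  ‖LinearMap.toContinuousLinearMap (Matrix.toEuclideanLin M)‖

/-- f is bandlimited of bandwidth δ: f(z,θ) = Σ_{|k|≤δ} f_k(z) e^{ikθ}. -/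
def Bandlimited (f : ℝ × ℝ → ℂ) (δ : ℕ) : Prop :=
  ∀ z θ : ℝ, f (z, θ) =
    ∑ k ∈ Finset.Icc (-(δ:ℤ)) (δ:ℤ), fourierMode f k z * Complex.exp (Complex.I * k * θ)

end

lemma orth_aux (n : ℤ) (hn : n ≠ 0) :
    (∫ θ in (0:ℝ)..(2 * Real.pi), Complex.exp (Complex.I * n * θ)) = 0 := by
  have hc : (Complex.I * n : ℂ) ≠ 0 := by
    simp [Complex.I_ne_zero, hn]
  rw [integral_exp_mul_complex hc]
  have h1 : Complex.exp (Complex.I * n * ((2 * Real.pi : ℝ) : ℂ)) = 1 := by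
    rw [show Complex.I * n * ((2 * Real.pi : ℝ) : ℂ) = n * (2 * (Real.pi : ℂ) * Complex.I) by
      push_cast; ring]
    exact Complex.exp_int_mul_two_pi_mul_I n
  rw [h1]
  simp

lemma mode_vanish_aux (f : ℝ × ℝ → ℂ) (δ : ℕ) (hband : Bandlimited f δ) (k : ℤ)
    (hk : k ∉ Finset.Icc (-(δ:ℤ)) (δ:ℤ)) (z : ℝ) : fourierMode f k z = 0 := by
  unfold fourierMode
  have hfun : (fun θ : ℝ => f (z, θ) * Complex.exp (-(Complex.I * k * θ)))
      = fun θ : ℝ => ∑ j ∈ Finset.Icc (-(δ:ℤ)) (δ:ℤ),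
          fourierMode f j z * Complex.exp (Complex.I * (j - k) * θ) := by
    funext θ
    rw [hband z θ, Finset.sum_mul]
    refine Finset.sum_congr rfl fun j _ => ?_
    rw [mul_assoc, ← Complex.exp_add]
    congr 2
    push_cast
    ring
  rw [hfun, intervalIntegral.integral_finset_sum]
  · rw [Finset.sum_eq_zero, mul_zero]
    intro j hj
    have hne : j - k ≠ 0 := by
      intro h
      rw [sub_eq_zero] at h
      exact hk (h ▸ hj)
    have horth := orth_aux (j - k) hne
    push_cast at horth
    rw [intervalIntegral.integral_const_mul, horth, mul_zero]
  · intro j _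
    exact Continuous.intervalIntegrable (by continuity) _ _

lemma diag_opNorm_le_aux {N : ℕ} (k : ℤ) (d : Fin N → Fin N → ℂ) (c : ℝ) (hc : 0 ≤ c)
    (hd : ∀ n m, ‖d n m‖ ≤ c) :
    opNorm (Matrix.of fun n m : Fin N => if (n.1 : ℤ) - (m.1 : ℤ) = k then d n m else 0) ≤ c := by
  rw [opNorm]
  refine ContinuousLinearMap.opNorm_le_bound _ hc fun x => ?_
  set A : Matrix (Fin N) (Fin N) ℂ :=
    Matrix.of fun n m : Fin N => if (n.1 : ℤ) - (m.1 : ℤ) = k then d n m else 0 with hA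
  have hAx : ∀ n : Fin N,
      (LinearMap.toContinuousLinearMap (Matrix.toEuclideanLin A)) x n = ∑ m, A n m * x m :=
    fun n => rfl
  rw [EuclideanSpace.norm_eq, EuclideanSpace.norm_eq,
    show c * Real.sqrt (∑ m, ‖x m‖ ^ 2) = Real.sqrt (c ^ 2 * ∑ m, ‖x m‖ ^ 2) by
      rw [Real.sqrt_mul (sq_nonneg c), Real.sqrt_sq hc]]
  apply Real.sqrt_le_sqrt
  set t : Fin N → ℝ := fun n => ∑ m, if (m.1 : ℤ) = (n.1 : ℤ) - k then ‖x m‖ ^ 2 else 0 with ht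
  have htnonneg : ∀ n, 0 ≤ t n := fun n =>
    Finset.sum_nonneg fun m _ => by positivity
  have step1 : ∀ n : Fin N,
      ‖(LinearMap.toContinuousLinearMap (Matrix.toEuclideanLin A)) x n‖ ^ 2 ≤ c ^ 2 * t n := by
    intro n
    rw [hAx]
    by_cases h : ∃ m0 : Fin N, (m0.1 : ℤ) = (n.1 : ℤ) - k
    · obtain ⟨m0, hm0⟩ := h
      have e1 : (∑ m, A n m * x m) = d n m0 * x m0 := by
        have congr1 : ∀ m : Fin N, A n m * x m = if m = m0 then d n m * x m else 0 := by
          intro m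
          by_cases hm : m = m0
          · subst hm
            rw [if_pos rfl]
            simp only [hA, Matrix.of_apply]
            rw [if_pos (by omega)]
          · rw [if_neg hm]
            simp only [hA, Matrix.of_apply]
            rw [if_neg (fun hcon => hm (Fin.ext (by omega))), zero_mul]
        rw [Finset.sum_congr rfl fun m _ => congr1 m, Finset.sum_ite_eq' Finset.univ m0,
          if_pos (Finset.mem_univ m0)]
      have e2 : t n = ‖x m0‖ ^ 2 := by
        have htn : t n = ∑ m, if (m.1 : ℤ) = (n.1 : ℤ) - k then ‖x m‖ ^ 2 else 0 := rfl
        rw [htn]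
        have congr2 : ∀ m : Fin N,
            (if (m.1 : ℤ) = (n.1 : ℤ) - k then ‖x m‖ ^ 2 else 0)
              = if m = m0 then ‖x m‖ ^ 2 else 0 := by
          intro m
          by_cases hm : m = m0
          · subst hm; rw [if_pos hm0, if_pos rfl]
          · rw [if_neg (fun hcon => hm (Fin.ext (by omega))), if_neg hm]
        rw [Finset.sum_congr rfl fun m _ => congr2 m, Finset.sum_ite_eq' Finset.univ m0,
          if_pos (Finset.mem_univ m0)]
      rw [e1, e2, norm_mul, mul_pow]
      exact mul_le_mul_of_nonneg_right
        (pow_le_pow_left₀ (norm_nonneg _) (hd n m0) 2) (by positivity)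
    · have e1 : (∑ m, A n m * x m) = 0 := by
        apply Finset.sum_eq_zero
        intro m _
        simp only [hA, Matrix.of_apply]
        rw [if_neg (fun hcon => h ⟨m, by omega⟩), zero_mul]
      rw [e1, norm_zero]
      exact le_trans (by norm_num) (mul_nonneg (sq_nonneg c) (htnonneg n))
  calc (∑ n, ‖(LinearMap.toContinuousLinearMap (Matrix.toEuclideanLin A)) x n‖ ^ 2)
      ≤ ∑ n, c ^ 2 * t n := Finset.sum_le_sum fun n _ => step1 n
    _ = c ^ 2 * ∑ n, t n := by rw [Finset.mul_sum]
    _ ≤ c ^ 2 * ∑ m, ‖x m‖ ^ 2 := by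
        apply mul_le_mul_of_nonneg_left _ (sq_nonneg c)
        have hcomm : (∑ n, t n) = ∑ m : Fin N, ∑ n : Fin N,
            if (m.1 : ℤ) = (n.1 : ℤ) - k then ‖x m‖ ^ 2 else 0 := Finset.sum_comm
        rw [hcomm]
        apply Finset.sum_le_sum
        intro m _
        by_cases h : ∃ n0 : Fin N, (n0.1 : ℤ) = (m.1 : ℤ) + k
        · obtain ⟨n0, hn0⟩ := h
          have congr3 : ∀ n : Fin N,
              (if (m.1 : ℤ) = (n.1 : ℤ) - k then ‖x m‖ ^ 2 else 0)
                = if n = n0 then ‖x m‖ ^ 2 else 0 := by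
            intro n
            by_cases hn : n = n0
            · subst hn; rw [if_pos (by omega), if_pos rfl]
            · rw [if_neg (fun hcon => hn (Fin.ext (by omega))), if_neg hn]
          rw [Finset.sum_congr rfl fun n _ => congr3 n, Finset.sum_ite_eq' Finset.univ n0,
            if_pos (Finset.mem_univ n0)]
        · rw [Finset.sum_eq_zero (fun n _ => if_neg (fun hcon => h ⟨n, by omega⟩))]
          positivity

/-- If f is 2π-periodic in its second argument and bandlimited
of bandwidth δ with smooth modes, each mode being bounded on [a, a+(b−a)β], then
‖T_N(f)‖ ≤ Σ_{|k|≤δ} sup_{z ∈ [a, a+(b−a)β]} |f_k(z)| for every N ≥ 1; in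
particular sup_N ‖T_N(f)‖ < ∞. -/
theorem TN_opNorm_le (a b β : ℝ) (hab : a < b) (hβ : 0 < β)
    (f : ℝ × ℝ → ℂ) (δ : ℕ)
    (hper : Periodic2 f) (hband : Bandlimited f δ)
    (hsmooth : ∀ k : ℤ, ContDiff ℝ (⊤ : ℕ∞) (fourierMode f k))
    (hbdd : ∀ k : ℤ, BddAbove
      ((fun z => ‖fourierMode f k z‖) '' Set.Icc a (a + (b - a) * β))) :
    (∀ N : ℕ, 0 < N → opNorm (TN a b β N f) ≤
        ∑ k ∈ Finset.Icc (-(δ:ℤ)) (δ:ℤ),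
          sSup ((fun z => ‖fourierMode f k z‖) '' Set.Icc a (a + (b - a) * β)))
      ∧ ∃ M : ℝ, ∀ N : ℕ, opNorm (TN a b β N f) ≤ M := by
  set c : ℤ → ℝ := fun k =>
    sSup ((fun z => ‖fourierMode f k z‖) '' Set.Icc a (a + (b - a) * β)) with hcdef
  have hba : 0 < (b - a) * β := mul_pos (by linarith) hβ
  have haIcc : a ∈ Set.Icc a (a + (b - a) * β) := ⟨le_refl a, by linarith⟩
  have hcnonneg : ∀ k, 0 ≤ c k := by
    intro k
    have : ‖fourierMode f k a‖ ≤ c k :=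
      le_csSup (hbdd k) ⟨a, haIcc, rfl⟩
    exact le_trans (norm_nonneg _) this
  have hzmem : ∀ N : ℕ, 0 < N → ∀ n m : Fin N,
      zN a b β N (n.1 + 1) (m.1 + 1) ∈ Set.Icc a (a + (b - a) * β) := by
    intro N hN n m
    have hNpos : (0:ℝ) < N := by exact_mod_cast hN
    have hh : 0 < hbar a b β N := div_pos hba hNpos
    constructor
    · have : (0:ℝ) ≤ hbar a b β N / 2 * ((n.1 + 1 : ℕ) + (m.1 + 1 : ℕ)) := by
        apply mul_nonneg (by linarith)
        positivity
      unfold zN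
      linarith
    · unfold zN
      have hn : ((n.1 + 1 : ℕ) : ℝ) ≤ N := by
        have := n.2; exact_mod_cast Nat.succ_le_of_lt this
      have hm : ((m.1 + 1 : ℕ) : ℝ) ≤ N := by
        have := m.2; exact_mod_cast Nat.succ_le_of_lt this
      have key : hbar a b β N / 2 * ((n.1 + 1 : ℕ) + (m.1 + 1 : ℕ))
          ≤ hbar a b β N / 2 * (2 * N) := by
        apply mul_le_mul_of_nonneg_left _ (by linarith)
        push_cast
        push_cast at hn hm
        linarith
      have heq : hbar a b β N / 2 * (2 * N) = (b - a) * β := by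
        have hN0 : (N:ℝ) ≠ 0 := ne_of_gt hNpos
        unfold hbar
        field_simp
      linarith [key, heq ▸ key]
  have part1 : ∀ N : ℕ, 0 < N → opNorm (TN a b β N f) ≤
      ∑ k ∈ Finset.Icc (-(δ:ℤ)) (δ:ℤ), c k := by
    intro N hN
    set A : ℤ → Matrix (Fin N) (Fin N) ℂ := fun k =>
      Matrix.of fun n m : Fin N =>
        if (n.1 : ℤ) - (m.1 : ℤ) = k then fourierMode f k (zN a b β N (n.1 + 1) (m.1 + 1))
        else 0 with hAdef
    have hdecomp : TN a b β N f = ∑ k ∈ Finset.Icc (-(δ:ℤ)) (δ:ℤ), A k := by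
      ext n m
      rw [Matrix.sum_apply]
      have congr1 : ∀ k ∈ Finset.Icc (-(δ:ℤ)) (δ:ℤ), A k n m =
          if k = (n.1 : ℤ) - (m.1 : ℤ)
            then fourierMode f k (zN a b β N (n.1 + 1) (m.1 + 1)) else 0 := by
        intro k _
        simp only [hAdef, Matrix.of_apply]
        by_cases h : (n.1 : ℤ) - (m.1 : ℤ) = k
        · rw [if_pos h, if_pos h.symm]
        · rw [if_neg h, if_neg (fun h2 => h h2.symm)]
      rw [Finset.sum_congr rfl congr1, Finset.sum_ite_eq' (Finset.Icc (-(δ:ℤ)) (δ:ℤ))]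
      by_cases hmem : (n.1 : ℤ) - (m.1 : ℤ) ∈ Finset.Icc (-(δ:ℤ)) (δ:ℤ)
      · rw [if_pos hmem]; rfl
      · rw [if_neg hmem]
        show fourierMode f ((n.1 : ℤ) - (m.1 : ℤ)) _ = 0
        exact mode_vanish_aux f δ hband _ hmem _
    rw [hdecomp, opNorm]
    have hsum1 : Matrix.toEuclideanLin (∑ k ∈ Finset.Icc (-(δ:ℤ)) (δ:ℤ), A k)
        = ∑ k ∈ Finset.Icc (-(δ:ℤ)) (δ:ℤ), Matrix.toEuclideanLin (A k) :=
      map_sum _ _ _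
    rw [hsum1, map_sum]
    refine le_trans (norm_sum_le _ _) (Finset.sum_le_sum fun k _ => ?_)
    have := diag_opNorm_le_aux (N := N) k
      (fun n m => fourierMode f k (zN a b β N (n.1 + 1) (m.1 + 1))) (c k) (hcnonneg k)
      (fun n m => le_csSup (hbdd k) ⟨zN a b β N (n.1 + 1) (m.1 + 1), hzmem N hN n m, rfl⟩)
    rw [opNorm] at this
    exact this
  refine ⟨part1, ⟨∑ k ∈ Finset.Icc (-(δ:ℤ)) (δ:ℤ), c k, fun N => ?_⟩⟩
  rcases Nat.eq_zero_or_pos N with h0 | hpos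
  · subst h0
    rw [opNorm]
    refine ContinuousLinearMap.opNorm_le_bound _
      (Finset.sum_nonneg fun k _ => hcnonneg k) fun x => ?_
    have hx : ∀ y : EuclideanSpace ℂ (Fin 0), ‖y‖ = 0 := by
      intro y
      rw [EuclideanSpace.norm_eq]
      simp
    rw [hx, hx, mul_zero]
  · exact part1 N hpos
end

section
/- Let f and g be 2π-periodic in their second argument and bandlimited with all modes smooth, and assume that for every k ≠ 0 the modes f_k and g_k vanish outside a compact subset of the open interval (a, a+(b−a)β). Then there is a constant C such that for every positive integer N, ‖ T_N(f) T_N(g) − T_N(fg) − (iħ_N/2) T_N({f,g}) ‖ ≤ C/N². -/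
noncomputable section

/-- Partial derivative in the first argument (z). -/
def pz (f : ℝ × ℝ → ℂ) (p : ℝ × ℝ) : ℂ := deriv (fun t => f (t, p.2)) p.1

/-- Partial derivative in the second argument (θ). -/
def pθ (f : ℝ × ℝ → ℂ) (p : ℝ × ℝ) : ℂ := deriv (fun t => f (p.1, t)) p.2

/-- The Poisson bracket {f,g} = ∂_θ f ∂_z g − ∂_z f ∂_θ g. -/
def pb (f g : ℝ × ℝ → ℂ) (p : ℝ × ℝ) : ℂ := pθ f p * pz g p - pz f p * pθ g p

/-- Every nonzero Fourier mode of f vanishes outside a compact subset of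
the open interval (a, a+(b−a)β). -/
def ModesCompactlySupported (a b β : ℝ) (f : ℝ × ℝ → ℂ) : Prop :=
  ∀ k : ℤ, k ≠ 0 → ∃ K : Set ℝ, IsCompact K ∧ K ⊆ Set.Ioo a (a + (b - a) * β) ∧
    ∀ z : ℝ, z ∉ K → fourierMode f k z = 0

end

set_option maxHeartbeats 2000000

section Aux

lemma integral_exp_int (m : ℤ) :
    (∫ θ in (0:ℝ)..(2*Real.pi), Complex.exp (Complex.I * m * θ))
      = if m = 0 then (2*Real.pi : ℂ) else 0 := by
  rcases eq_or_ne m 0 with hm | hm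
  · simp [hm]
  · have hc : Complex.I * m ≠ 0 := by
      simp [Complex.ext_iff, hm]
    rw [if_neg hm, integral_exp_mul_complex hc]
    have h1 : Complex.I * m * (2*Real.pi : ℝ) = m * (2 * Real.pi * Complex.I) := by
      push_cast; ring
    have h2 : Complex.exp (Complex.I * m * (0:ℝ)) = 1 := by norm_num
    rw [h1, Complex.exp_int_mul_two_pi_mul_I, h2]
    simp



lemma fourierMode_finsum {ι : Type*} (P : Finset ι) (e : ι → ℝ → ℂ) (w : ι → ℤ)
    (F : ℝ × ℝ → ℂ)
    (hF : ∀ z θ : ℝ, F (z, θ) = ∑ p ∈ P, e p z * Complex.exp (Complex.I * (w p) * θ))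
    (k : ℤ) (z : ℝ) :
    fourierMode F k z = ∑ p ∈ P.filter (fun p => w p = k), e p z := by
  unfold fourierMode
  have hint : ∀ θ : ℝ, F (z, θ) * Complex.exp (-(Complex.I * k * θ))
      = ∑ p ∈ P, e p z * Complex.exp (Complex.I * ((w p - k : ℤ)) * θ) := by
    intro θ
    rw [hF z θ, Finset.sum_mul]
    refine Finset.sum_congr rfl fun p _ => ?_
    rw [mul_assoc, ← Complex.exp_add]
    congr 2
    push_cast; ring
  rw [intervalIntegral.integral_congr (fun θ _ => hint θ)]
  rw [intervalIntegral.integral_finset_sum (fun p _ => by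
    apply Continuous.intervalIntegrable
    exact continuous_const.mul (Complex.continuous_exp.comp (by continuity)))]
  have : ∀ p ∈ P, (∫ θ in (0:ℝ)..(2*Real.pi), e p z * Complex.exp (Complex.I * ((w p - k : ℤ)) * θ))
      = if w p = k then (2*Real.pi : ℂ) * e p z else 0 := by
    intro p _
    rw [intervalIntegral.integral_const_mul, integral_exp_int]
    rcases eq_or_ne (w p) k with h | h
    · simp [h, sub_eq_zero.mpr, mul_comm]
    · simp [sub_eq_zero, h]
  rw [Finset.sum_congr rfl this, ← Finset.sum_filter, Finset.mul_sum]
  refine Finset.sum_congr rfl fun p _ => ?_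
  have hpi : (Real.pi : ℂ) ≠ 0 := by
    simpa using Real.pi_ne_zero
  field_simp


section
variable {f g : ℝ × ℝ → ℂ} {δf δg : ℕ}

lemma mode_vanish (hband : Bandlimited f δf) {k : ℤ}
    (hk : k ∉ Finset.Icc (-(δf:ℤ)) (δf:ℤ)) (z : ℝ) : fourierMode f k z = 0 := by
  rw [fourierMode_finsum _ (fourierMode f) id f hband k z]
  simp only [id_eq]
  rw [Finset.filter_eq', if_neg hk, Finset.sum_empty]

lemma diag_sum {s t : Finset ℤ} (c : ℤ → ℤ → ℂ) (d : ℤ)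
    (hvan : ∀ j j' : ℤ, j' ∉ t → c j j' = 0) :
    ∑ p ∈ (s ×ˢ t).filter (fun p => p.1 + p.2 = d), c p.1 p.2
      = ∑ j ∈ s, c j (d - j) := by
  rw [← Finset.sum_filter_add_sum_filter_not s (fun j => d - j ∈ t) (fun j => c j (d - j))]
  have h2 : ∑ j ∈ s.filter (fun j => ¬ (d - j ∈ t)), c j (d - j) = 0 :=
    Finset.sum_eq_zero fun j hj => hvan _ _ (Finset.mem_filter.mp hj).2
  rw [h2, add_zero]
  refine Finset.sum_bij' (fun p _ => p.1) (fun j _ => (j, d - j)) ?_ ?_ ?_ ?_ ?_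
  · intro p hp
    simp only [Finset.mem_filter, Finset.mem_product] at hp ⊢
    exact ⟨hp.1.1, by rw [← hp.2]; simpa using hp.1.2⟩
  · intro j hj
    simp only [Finset.mem_filter] at hj ⊢
    exact ⟨Finset.mem_product.mpr ⟨hj.1, hj.2⟩, by ring⟩
  · intro p hp
    obtain ⟨p1, p2⟩ := p
    simp only [Finset.mem_filter] at hp
    have := hp.2
    simp only at this ⊢
    rw [show d - p1 = p2 by omega]
  · intro j hj; rfl
  · intro p hp
    obtain ⟨p1, p2⟩ := p
    simp only [Finset.mem_filter] at hp
    have h2 := hp.2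
    simp only at h2 ⊢
    rw [show d - p1 = p2 by omega]

lemma mul_repr (hbandf : Bandlimited f δf) (hbandg : Bandlimited g δg) (z θ : ℝ) :
    f (z, θ) * g (z, θ) =
      ∑ p ∈ (Finset.Icc (-(δf:ℤ)) (δf:ℤ)) ×ˢ (Finset.Icc (-(δg:ℤ)) (δg:ℤ)),
        (fourierMode f p.1 z * fourierMode g p.2 z)
          * Complex.exp (Complex.I * ((p.1 + p.2 : ℤ)) * θ) := by
  rw [hbandf z θ, hbandg z θ, Finset.sum_mul_sum, ← Finset.sum_product']
  refine Finset.sum_congr rfl fun p _ => ?_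
  rw [mul_mul_mul_comm, ← Complex.exp_add]
  congr 2
  push_cast; ring

lemma mode_mul (hbandf : Bandlimited f δf) (hbandg : Bandlimited g δg) (d : ℤ) (z : ℝ) :
    fourierMode (fun p => f p * g p) d z =
      ∑ j ∈ Finset.Icc (-(δf:ℤ)) (δf:ℤ), fourierMode f j z * fourierMode g (d - j) z := by
  have h := fourierMode_finsum (ι := ℤ × ℤ)
    ((Finset.Icc (-(δf:ℤ)) (δf:ℤ)) ×ˢ (Finset.Icc (-(δg:ℤ)) (δg:ℤ)))
    (fun p z => fourierMode f p.1 z * fourierMode g p.2 z)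
    (fun p => p.1 + p.2) (fun p => f p * g p)
    (fun z θ => mul_repr hbandf hbandg z θ) d z
  exact h.trans (diag_sum (fun j j' => fourierMode f j z * fourierMode g j' z) d fun j j' hj' => by
      show fourierMode f j z * fourierMode g j' z = 0
      rw [mode_vanish hbandg hj' z, mul_zero])

lemma hasDerivAt_cexp_int (k : ℤ) (θ : ℝ) :
    HasDerivAt (fun t : ℝ => Complex.exp (Complex.I * k * t))
      (Complex.I * k * Complex.exp (Complex.I * k * θ)) θ := by
  have h1 : HasDerivAt (fun t : ℝ => ((t : ℂ))) 1 θ := (hasDerivAt_id θ).ofReal_comp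
  have h2 := (h1.const_mul (Complex.I * (k:ℂ))).cexp
  simpa [mul_comm] using h2

lemma ptheta_repr (hbandf : Bandlimited f δf) (z θ : ℝ) :
    pθ f (z, θ) = ∑ k ∈ Finset.Icc (-(δf:ℤ)) (δf:ℤ),
      (Complex.I * k * fourierMode f k z) * Complex.exp (Complex.I * k * θ) := by
  have he : (fun t => f (z, t)) = fun t =>
      ∑ k ∈ Finset.Icc (-(δf:ℤ)) (δf:ℤ), fourierMode f k z * Complex.exp (Complex.I * k * (t:ℝ)) :=
    funext fun t => hbandf z t
  show deriv (fun t => f (z, t)) θ = _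
  rw [he]
  rw [(HasDerivAt.fun_sum (fun k _ => ((hasDerivAt_cexp_int k θ).const_mul
      (fourierMode f k z)))).deriv]
  refine Finset.sum_congr rfl fun k _ => by ring

lemma pz_repr (hbandf : Bandlimited f δf)
    (hsmoothf : ∀ k : ℤ, ContDiff ℝ (⊤ : ℕ∞) (fourierMode f k)) (z θ : ℝ) :
    pz f (z, θ) = ∑ k ∈ Finset.Icc (-(δf:ℤ)) (δf:ℤ),
      deriv (fourierMode f k) z * Complex.exp (Complex.I * k * θ) := by
  have he : (fun t => f (t, θ)) = fun t =>
      ∑ k ∈ Finset.Icc (-(δf:ℤ)) (δf:ℤ), fourierMode f k (t:ℝ) * Complex.exp (Complex.I * k * θ) :=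
    funext fun t => hbandf t θ
  show deriv (fun t => f (t, θ)) z = _
  rw [he]
  exact (HasDerivAt.fun_sum (fun k _ =>
    ((((hsmoothf k).differentiable (by simp)) z).hasDerivAt).mul_const _)).deriv

lemma pb_repr (hbandf : Bandlimited f δf) (hbandg : Bandlimited g δg)
    (hsmoothf : ∀ k : ℤ, ContDiff ℝ (⊤ : ℕ∞) (fourierMode f k))
    (hsmoothg : ∀ k : ℤ, ContDiff ℝ (⊤ : ℕ∞) (fourierMode g k)) (z θ : ℝ) :
    pb f g (z, θ) =
      ∑ p ∈ (Finset.Icc (-(δf:ℤ)) (δf:ℤ)) ×ˢ (Finset.Icc (-(δg:ℤ)) (δg:ℤ)),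
        ((Complex.I * p.1 * fourierMode f p.1 z) * deriv (fourierMode g p.2) z
          - deriv (fourierMode f p.1) z * (Complex.I * p.2 * fourierMode g p.2 z))
          * Complex.exp (Complex.I * ((p.1 + p.2 : ℤ)) * θ) := by
  show pθ f (z,θ) * pz g (z,θ) - pz f (z,θ) * pθ g (z,θ) = _
  rw [ptheta_repr hbandf, pz_repr hbandg hsmoothg, pz_repr hbandf hsmoothf,
    ptheta_repr hbandg, Finset.sum_mul_sum, Finset.sum_mul_sum,
    ← Finset.sum_product', ← Finset.sum_product', ← Finset.sum_sub_distrib]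
  refine Finset.sum_congr rfl fun p _ => ?_
  have hE : Complex.exp (Complex.I * p.1 * θ) * Complex.exp (Complex.I * p.2 * θ)
      = Complex.exp (Complex.I * ((p.1 + p.2 : ℤ)) * θ) := by
    rw [← Complex.exp_add]; congr 1; push_cast; ring
  rw [← hE]; ring

lemma mode_pb (hbandf : Bandlimited f δf) (hbandg : Bandlimited g δg)
    (hsmoothf : ∀ k : ℤ, ContDiff ℝ (⊤ : ℕ∞) (fourierMode f k))
    (hsmoothg : ∀ k : ℤ, ContDiff ℝ (⊤ : ℕ∞) (fourierMode g k)) (d : ℤ) (z : ℝ) :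
    fourierMode (pb f g) d z =
      ∑ j ∈ Finset.Icc (-(δf:ℤ)) (δf:ℤ),
        ((Complex.I * j * fourierMode f j z) * deriv (fourierMode g (d - j)) z
          - deriv (fourierMode f j) z * (Complex.I * (((d - j : ℤ)) : ℂ) * fourierMode g (d - j) z)) := by
  have h := fourierMode_finsum (ι := ℤ × ℤ)
    ((Finset.Icc (-(δf:ℤ)) (δf:ℤ)) ×ˢ (Finset.Icc (-(δg:ℤ)) (δg:ℤ)))
    (fun p z => (Complex.I * p.1 * fourierMode f p.1 z) * deriv (fourierMode g p.2) z
          - deriv (fourierMode f p.1) z * (Complex.I * p.2 * fourierMode g p.2 z))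
    (fun p => p.1 + p.2) (pb f g)
    (fun z θ => pb_repr hbandf hbandg hsmoothf hsmoothg z θ) d z
  refine h.trans (diag_sum (fun j j' => (Complex.I * j * fourierMode f j z) * deriv (fourierMode g j') z
          - deriv (fourierMode f j) z * (Complex.I * j' * fourierMode g j' z)) d fun j j' hj' => ?_)
  have h0 : fourierMode g j' = fun _ => 0 := funext fun z => mode_vanish hbandg hj' z
  show (Complex.I * j * fourierMode f j z) * deriv (fourierMode g j') z
          - deriv (fourierMode f j) z * (Complex.I * j' * fourierMode g j' z) = 0
  rw [h0]
  simp

end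


lemma mvt_second (h : ℝ → ℂ) (hsm : ContDiff ℝ (⊤ : ℕ∞) h) {lo hi M2 : ℝ}
    (hM2 : ∀ x ∈ Set.Icc lo hi, ‖deriv (deriv h) x‖ ≤ M2)
    {z u : ℝ} (hz : z ∈ Set.Icc lo hi) (hu : u ∈ Set.Icc lo hi) :
    ‖h u - h z - ((u - z : ℝ) : ℂ) * deriv h z‖ ≤ M2 * (u - z)^2 := by
  have hdiff : Differentiable ℝ h := hsm.differentiable (by simp)
  have hsm' : ContDiff ℝ (⊤ : ℕ∞) h := hsm.of_le (by simp)
  have hdiff2 : Differentiable ℝ (deriv h) :=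
    (hsm'.iterate_deriv 1).differentiable (by simp)
  have hIcc : Set.uIcc z u ⊆ Set.Icc lo hi := Set.uIcc_subset_Icc hz hu
  have step1 : ∀ x ∈ Set.uIcc z u, ‖deriv h x - deriv h z‖ ≤ M2 * |u - z| := by
    intro x hx
    have hxz : |x - z| ≤ |u - z| := by
      rcases Set.mem_uIcc.mp hx with ⟨h1, h2⟩ | ⟨h1, h2⟩ <;> rw [abs_le] <;>
        constructor <;> simp [abs_le] at * <;> nlinarith [abs_nonneg (u - z), le_abs_self (u-z), neg_abs_le (u-z)]
    have := Convex.norm_image_sub_le_of_norm_deriv_le (f := deriv h)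
      (fun y _ => hdiff2 y) hM2 (convex_Icc lo hi) hz (hIcc hx)
    calc ‖deriv h x - deriv h z‖ ≤ M2 * ‖x - z‖ := this
    _ ≤ M2 * |u - z| := by
        have hM2' : 0 ≤ M2 := le_trans (norm_nonneg _) (hM2 z hz)
        simpa [Real.norm_eq_abs] using mul_le_mul_of_nonneg_left hxz hM2'
  -- the auxiliary function
  set φ : ℝ → ℂ := fun x => h x - ((x - z : ℝ) : ℂ) * deriv h z with hφ
  have hφderiv : ∀ x : ℝ, HasDerivAt φ (deriv h x - deriv h z) x := by
    intro x
    have h1 : HasDerivAt (fun x : ℝ => ((x - z : ℝ) : ℂ)) 1 x :=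
      ((hasDerivAt_id x).sub_const z).ofReal_comp
    have := ((hdiff x).hasDerivAt).sub (h1.mul_const (deriv h z))
    rw [hφ]
    convert this using 2 with y
    · rfl
    · rfl
    · ring
  have key := Convex.norm_image_sub_le_of_norm_deriv_le (f := φ)
    (fun y _ => (hφderiv y).differentiableAt)
    (fun y hy => by rw [(hφderiv y).deriv]; exact step1 y hy)
    (convex_uIcc z u) (Set.left_mem_uIcc) (Set.right_mem_uIcc)
  have : ‖φ u - φ z‖ ≤ M2 * |u - z| * ‖u - z‖ := key
  have h2 : φ u - φ z = h u - h z - ((u - z : ℝ) : ℂ) * deriv h z := by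
    simp only [hφ, sub_self]
    push_cast
    ring
  rw [h2] at this
  calc ‖h u - h z - ((u - z : ℝ) : ℂ) * deriv h z‖ ≤ M2 * |u - z| * ‖u - z‖ := this
  _ = M2 * (u - z)^2 := by
      rw [Real.norm_eq_abs, mul_assoc, ← abs_mul, ← _root_.sq_abs (u - z)]
      congr 1
      rw [sq, abs_mul]

lemma twoFunTaylor (h₁ h₂ : ℝ → ℂ) (hh₁ : ContDiff ℝ (⊤ : ℕ∞) h₁) (hh₂ : ContDiff ℝ (⊤ : ℕ∞) h₂)
    (R lo hi : ℝ) :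
    ∃ C : ℝ, 0 ≤ C ∧ ∀ z s t : ℝ, |s| ≤ R → |t| ≤ R → z ∈ Set.Icc lo hi →
      ‖h₁ (z+s) * h₂ (z+t) - (h₁ z * h₂ z + (s:ℂ) * deriv h₁ z * h₂ z
          + (t:ℂ) * h₁ z * deriv h₂ z)‖ ≤ C * (s^2 + t^2) := by
  have hh₁' : ContDiff ℝ (⊤ : ℕ∞) h₁ := hh₁.of_le (by simp)
  have hh₂' : ContDiff ℝ (⊤ : ℕ∞) h₂ := hh₂.of_le (by simp)
  set J := Set.Icc (lo - R) (hi + R) with hJ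
  have hJc : IsCompact J := isCompact_Icc
  obtain ⟨A0, hA0⟩ := hJc.exists_bound_of_continuousOn hh₁.continuous.continuousOn
  obtain ⟨A1, hA1⟩ := hJc.exists_bound_of_continuousOn
    ((hh₁'.iterate_deriv 1).continuous.continuousOn)
  obtain ⟨A2, hA2⟩ := hJc.exists_bound_of_continuousOn
    ((hh₁'.iterate_deriv 2).continuous.continuousOn)
  obtain ⟨B0, hB0⟩ := hJc.exists_bound_of_continuousOn hh₂.continuous.continuousOn
  obtain ⟨B1, hB1⟩ := hJc.exists_bound_of_continuousOn
    ((hh₂'.iterate_deriv 1).continuous.continuousOn)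
  obtain ⟨B2, hB2⟩ := hJc.exists_bound_of_continuousOn
    ((hh₂'.iterate_deriv 2).continuous.continuousOn)
  set A0' := max A0 0; set A1' := max A1 0; set A2' := max A2 0
  set B0' := max B0 0; set B1' := max B1 0; set B2' := max B2 0
  set R' := max R 0
  refine ⟨A2' * B0' + (A0' + R' * A1') * B2' + A1' * B1', by positivity, ?_⟩
  intro z s t hs ht hzm
  have hR : 0 ≤ R := le_trans (abs_nonneg s) hs
  have hsR : -R ≤ s ∧ s ≤ R := abs_le.mp hs
  have htR : -R ≤ t ∧ t ≤ R := abs_le.mp ht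
  obtain ⟨hz1, hz2⟩ := hzm
  have hzJ : z ∈ J := ⟨by linarith, by linarith⟩
  have hzsJ : z + s ∈ J := ⟨by linarith [hsR.1], by linarith [hsR.2]⟩
  have hztJ : z + t ∈ J := ⟨by linarith [htR.1], by linarith [htR.2]⟩
  have e1 : ‖h₁ (z+s) - h₁ z - (s:ℂ) * deriv h₁ z‖ ≤ A2' * s^2 := by
    have := mvt_second h₁ hh₁ (M2 := A2')
      (fun x hx => le_trans (by simpa [Function.iterate_succ] using hA2 x hx) (le_max_left _ _))
      hzJ hzsJ
    simpa using this
  have e2 : ‖h₂ (z+t) - h₂ z - (t:ℂ) * deriv h₂ z‖ ≤ B2' * t^2 := by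
    have := mvt_second h₂ hh₂ (M2 := B2')
      (fun x hx => le_trans (by simpa [Function.iterate_succ] using hB2 x hx) (le_max_left _ _))
      hzJ hztJ
    simpa using this
  have b0 : ‖h₁ z‖ ≤ A0' := le_trans (hA0 z hzJ) (le_max_left _ _)
  have b1 : ‖deriv h₁ z‖ ≤ A1' := le_trans (by simpa using hA1 z hzJ) (le_max_left _ _)
  have c0 : ‖h₂ (z+t)‖ ≤ B0' := le_trans (hB0 _ hztJ) (le_max_left _ _)
  have c1 : ‖deriv h₂ z‖ ≤ B1' := le_trans (by simpa using hB1 z hzJ) (le_max_left _ _)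
  have hid : h₁ (z+s) * h₂ (z+t) - (h₁ z * h₂ z + (s:ℂ) * deriv h₁ z * h₂ z
        + (t:ℂ) * h₁ z * deriv h₂ z)
      = (h₁ (z+s) - h₁ z - (s:ℂ) * deriv h₁ z) * h₂ (z+t)
        + (h₁ z + (s:ℂ) * deriv h₁ z) * (h₂ (z+t) - h₂ z - (t:ℂ) * deriv h₂ z)
        + ((s:ℂ) * deriv h₁ z) * ((t:ℂ) * deriv h₂ z) := by ring
  rw [hid]
  have hA0n : (0:ℝ) ≤ A0' := le_max_right _ _
  have hA1n : (0:ℝ) ≤ A1' := le_max_right _ _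
  have hA2n : (0:ℝ) ≤ A2' := le_max_right _ _
  have hB0n : (0:ℝ) ≤ B0' := le_max_right _ _
  have hB1n : (0:ℝ) ≤ B1' := le_max_right _ _
  have hB2n : (0:ℝ) ≤ B2' := le_max_right _ _
  have n1 : ‖(h₁ (z+s) - h₁ z - (s:ℂ) * deriv h₁ z) * h₂ (z+t)‖ ≤ A2' * s^2 * B0' := by
    rw [norm_mul]
    exact mul_le_mul e1 c0 (norm_nonneg _) (by positivity)
  have n2 : ‖(h₁ z + (s:ℂ) * deriv h₁ z) * (h₂ (z+t) - h₂ z - (t:ℂ) * deriv h₂ z)‖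
      ≤ (A0' + R' * A1') * (B2' * t^2) := by
    rw [norm_mul]
    refine mul_le_mul ?_ e2 (norm_nonneg _) (by positivity)
    calc ‖h₁ z + (s:ℂ) * deriv h₁ z‖ ≤ ‖h₁ z‖ + ‖(s:ℂ)‖ * ‖deriv h₁ z‖ := by
          refine le_trans (norm_add_le _ _) ?_
          rw [norm_mul]
    _ ≤ A0' + R' * A1' := by
        have : ‖(s:ℂ)‖ = |s| := by simp [Complex.norm_real]
        rw [this]
        have h1 : |s| * ‖deriv h₁ z‖ ≤ R' * A1' :=
          mul_le_mul (le_trans hs (le_max_left _ _)) b1 (norm_nonneg _)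
            (le_trans (abs_nonneg s) (le_trans hs (le_max_left _ _)))
        linarith [b0]
  have n3 : ‖((s:ℂ) * deriv h₁ z) * ((t:ℂ) * deriv h₂ z)‖ ≤ |s| * |t| * (A1' * B1') := by
    rw [norm_mul, norm_mul, norm_mul]
    simp only [Complex.norm_real]
    calc ‖s‖ * ‖deriv h₁ z‖ * (‖t‖ * ‖deriv h₂ z‖)
        ≤ ‖s‖ * A1' * (‖t‖ * B1') := by
          refine mul_le_mul (mul_le_mul_of_nonneg_left b1 (norm_nonneg _))
            (mul_le_mul_of_nonneg_left c1 (norm_nonneg _)) (by positivity) (by positivity)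
    _ = |s| * |t| * (A1' * B1') := by rw [Real.norm_eq_abs, Real.norm_eq_abs]; ring
  have hst : |s| * |t| ≤ s^2 + t^2 := by nlinarith [_root_.sq_abs s, _root_.sq_abs t, sq_nonneg (|s| - |t|)]
  refine le_trans (norm_add_le _ _) ?_
  refine le_trans (add_le_add (le_trans (norm_add_le _ _) (add_le_add n1 n2)) n3) ?_
  have hs2 : s^2 ≤ s^2 + t^2 := by nlinarith [sq_nonneg t]
  have ht2 : t^2 ≤ s^2 + t^2 := by nlinarith [sq_nonneg s]
  have hst' : |s| * |t| * (A1' * B1') ≤ (s^2 + t^2) * (A1' * B1') :=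
    mul_le_mul_of_nonneg_right hst (by positivity)
  nlinarith [mul_le_mul_of_nonneg_left hs2 (mul_nonneg hA2n hB0n),
    mul_le_mul_of_nonneg_left ht2 (mul_nonneg (by positivity : (0:ℝ) ≤ A0' + R' * A1') hB2n)]


lemma card_pred_le {N : ℕ} (w : ℕ) (j : ℤ) (p : Fin N → Prop) [DecidablePred p]
    (hp : ∀ i : Fin N, p i → (i : ℤ) ∈ Finset.Icc (j - w) (j + w)) :
    (Finset.univ.filter p).card ≤ 2*w+1 := by
  have h : (Finset.univ.filter p).card ≤ (Finset.Icc (j - (w:ℤ)) (j + (w:ℤ))).card := by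
    apply Finset.card_le_card_of_injOn (fun i : Fin N => (i : ℤ))
    · intro i hi
      exact hp i (Finset.mem_filter.mp hi).2
    · intro i _ i' _ hii
      simp only at hii
      apply Fin.ext
      exact_mod_cast hii
  refine le_trans h ?_
  rw [Int.card_Icc]
  omega

lemma opNorm_banded {N : ℕ} (M : Matrix (Fin N) (Fin N) ℂ) (w : ℕ) (c : ℝ) (hc : 0 ≤ c)
    (hband : ∀ n m : Fin N, (w:ℤ) < |(n:ℤ) - (m:ℤ)| → M n m = 0)
    (hentry : ∀ n m : Fin N, ‖M n m‖ ≤ c) :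
    opNorm M ≤ ((2*w+1 : ℕ) : ℝ) * c := by
  refine ContinuousLinearMap.opNorm_le_bound _ (by positivity) fun x => ?_
  set A := LinearMap.toContinuousLinearMap (Matrix.toEuclideanLin M)
  have happ : ∀ n : Fin N, A x n = ∑ m : Fin N, M n m * x m := fun n => rfl
  set W : ℝ := ((2*w+1 : ℕ) : ℝ) with hW
  have hWn : (0:ℝ) ≤ W := by positivity
  set band : Fin N → Finset (Fin N) :=
    fun n => Finset.univ.filter (fun m => |(n:ℤ) - (m:ℤ)| ≤ w) with hbanddef
  -- row bound
  have row1 : ∀ n : Fin N, ‖A x n‖ ≤ c * ∑ m ∈ band n, ‖x m‖ := by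
    intro n
    rw [happ n]
    rw [← Finset.sum_subset (Finset.subset_univ (band n)) (fun m _ hm => by
      rw [hband n m (by simpa [hbanddef, not_le] using hm), zero_mul])]
    refine le_trans (norm_sum_le _ _) ?_
    rw [Finset.mul_sum]
    refine Finset.sum_le_sum fun m _ => ?_
    rw [norm_mul]
    exact mul_le_mul_of_nonneg_right (hentry n m) (norm_nonneg _)
  have rowsq : ∀ n : Fin N, ‖A x n‖^2 ≤ c^2 * (W * ∑ m ∈ band n, ‖x m‖^2) := by
    intro n
    have h1 : ‖A x n‖^2 ≤ (c * ∑ m ∈ band n, ‖x m‖)^2 := by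
      have hnn : (0:ℝ) ≤ c * ∑ m ∈ band n, ‖x m‖ :=
        mul_nonneg hc (Finset.sum_nonneg fun _ _ => norm_nonneg _)
      exact pow_le_pow_left₀ (norm_nonneg _) (row1 n) 2
    refine le_trans h1 ?_
    rw [mul_pow]
    refine mul_le_mul_of_nonneg_left ?_ (by positivity)
    refine le_trans (sq_sum_le_card_mul_sum_sq) ?_
    refine mul_le_mul_of_nonneg_right ?_ (Finset.sum_nonneg fun _ _ => by positivity)
    have hcard : (band n).card ≤ 2*w+1 :=
      card_pred_le w (n : ℤ) _ (fun i hi => by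
        simp only [Finset.mem_Icc]
        have := abs_le.mp hi
        omega)
    exact_mod_cast Nat.cast_le.mpr hcard
  -- total
  have total : ∑ n, ‖A x n‖^2 ≤ (W * c)^2 * ∑ m, ‖x m‖^2 := by
    refine le_trans (Finset.sum_le_sum fun n _ => rowsq n) ?_
    rw [← Finset.mul_sum, ← Finset.mul_sum]
    have hswap : ∑ n, ∑ m ∈ band n, ‖x m‖^2 ≤ W * ∑ m, ‖x m‖^2 := by
      have h1 : ∀ n : Fin N, ∑ m ∈ band n, ‖x m‖^2
          = ∑ m : Fin N, if |(n:ℤ) - (m:ℤ)| ≤ (w:ℤ) then ‖x m‖^2 else 0 := fun n =>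
        Finset.sum_filter _ _
      rw [Finset.sum_congr rfl fun n _ => h1 n, Finset.sum_comm]
      have h2 : ∀ m : Fin N, ∑ n : Fin N, (if |(n:ℤ) - (m:ℤ)| ≤ (w:ℤ) then ‖x m‖^2 else 0)
          ≤ W * ‖x m‖^2 := by
        intro m
        rw [← Finset.sum_filter, Finset.sum_const, nsmul_eq_mul]
        refine mul_le_mul_of_nonneg_right ?_ (by positivity)
        have hcard := card_pred_le (N := N) w (m : ℤ)
          (fun n => |(n:ℤ) - (m:ℤ)| ≤ (w:ℤ)) (fun i hi => by
            simp only [Finset.mem_Icc]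
            have := abs_le.mp hi
            omega)
        rw [hW]
        exact_mod_cast Nat.cast_le.mpr hcard
      refine le_trans (Finset.sum_le_sum fun m _ => h2 m) ?_
      rw [Finset.mul_sum]
    calc c^2 * (W * ∑ n, ∑ m ∈ band n, ‖x m‖^2)
        ≤ c^2 * (W * (W * ∑ m, ‖x m‖^2)) := by
          refine mul_le_mul_of_nonneg_left (mul_le_mul_of_nonneg_left hswap hWn) (by positivity)
    _ = (W * c)^2 * ∑ m, ‖x m‖^2 := by ring
  -- conclude
  have hAx : ‖A x‖ = Real.sqrt (∑ n, ‖A x n‖^2) := by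
    rw [EuclideanSpace.norm_eq]
  have hx : ‖x‖ = Real.sqrt (∑ m, ‖x m‖^2) := by
    rw [EuclideanSpace.norm_eq]
  rw [hAx]
  calc Real.sqrt (∑ n, ‖A x n‖^2) ≤ Real.sqrt ((W * c)^2 * ∑ m, ‖x m‖^2) :=
        Real.sqrt_le_sqrt total
  _ = W * c * ‖x‖ := by
      rw [Real.sqrt_mul (by positivity), Real.sqrt_sq (by positivity), hx]


lemma exact_sum (a b β : ℝ) (hL : 0 < (b - a) * β)
    (f g : ℝ × ℝ → ℂ) (δf δg : ℕ)
    (hbandf : Bandlimited f δf) (hbandg : Bandlimited g δg)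
    (εf : ℝ) (hεpos : 0 < εf)
    (hεf : ∀ k : ℤ, k ∈ Finset.Icc (-(δf:ℤ)) (δf:ℤ) → k ≠ 0 → ∀ z : ℝ,
      (z ≤ a + εf ∨ a + (b - a) * β - εf ≤ z) → fourierMode f k z = 0)
    (N : ℕ) (hN1 : 0 < N) (hN2 : (b - a) * β * δf ≤ 2 * εf * N)
    (n m : Fin N) :
    ∑ l : Fin N, fourierMode f ((n:ℤ) - (l:ℤ)) (zN a b β N (n.1+1) (l.1+1))
        * fourierMode g ((l:ℤ) - (m:ℤ)) (zN a b β N (l.1+1) (m.1+1))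
    = ∑ k ∈ Finset.Icc (-(δf:ℤ)) (δf:ℤ),
        fourierMode f k (a + hbar a b β N / 2 * (2*(n.1:ℝ) - (k:ℝ) + 2))
          * fourierMode g ((n:ℤ) - (m:ℤ) - k)
              (a + hbar a b β N / 2 * ((n.1:ℝ) - (k:ℝ) + (m.1:ℝ) + 2)) := by
  have hhb : 0 < hbar a b β N := div_pos hL (by exact_mod_cast hN1)
  have hhbN : hbar a b β N * N = (b - a) * β := by
    unfold hbar
    field_simp
  set hb := hbar a b β N with hhbdef
  set G : ℤ → ℂ := fun k =>
    fourierMode f k (a + hb / 2 * (2*(n.1:ℝ) - (k:ℝ) + 2))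
      * fourierMode g ((n:ℤ) - (m:ℤ) - k) (a + hb / 2 * ((n.1:ℝ) - (k:ℝ) + (m.1:ℝ) + 2))
    with hG
  have step1 : ∑ l : Fin N, fourierMode f ((n:ℤ) - (l:ℤ)) (zN a b β N (n.1+1) (l.1+1))
        * fourierMode g ((l:ℤ) - (m:ℤ)) (zN a b β N (l.1+1) (m.1+1))
      = ∑ k ∈ Finset.Icc ((n:ℤ) - N + 1) (n:ℤ), G k := by
    refine Finset.sum_nbij' (i := fun l : Fin N => (n:ℤ) - (l:ℤ))
      (j := fun k : ℤ => (⟨((n:ℤ) - k).toNat % N, Nat.mod_lt _ hN1⟩ : Fin N))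
      ?_ ?_ ?_ ?_ ?_
    · intro l _
      simp only [Finset.mem_Icc]
      omega
    · intro k _
      exact Finset.mem_univ _
    · intro l _
      apply Fin.ext
      show ((n:ℤ) - ((n:ℤ) - (l:ℤ))).toNat % N = l.1
      rw [show ((n:ℤ) - ((n:ℤ) - (l:ℤ))).toNat = l.1 by omega]
      exact Nat.mod_eq_of_lt l.isLt
    · intro k hk
      simp only [Finset.mem_Icc] at hk
      show (n:ℤ) - ((⟨((n:ℤ) - k).toNat % N, Nat.mod_lt _ hN1⟩ : Fin N) : ℤ) = k
      have h1 : ((n:ℤ) - k).toNat < N := by omega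
      have h2 : ((⟨((n:ℤ) - k).toNat % N, Nat.mod_lt _ hN1⟩ : Fin N) : ℕ)
          = ((n:ℤ) - k).toNat := Nat.mod_eq_of_lt h1
      omega
    · intro l _
      rw [hG]
      simp only
      congr 2
      · unfold zN
        rw [← hhbdef]
        congr 1
        push_cast
        ring
      · omega
      · unfold zN
        rw [← hhbdef]
        congr 1
        push_cast
        ring
  rw [step1]
  have hvan1 : ∀ k ∈ Finset.Icc ((n:ℤ) - N + 1) (n:ℤ) ∪ Finset.Icc (-(δf:ℤ)) (δf:ℤ),
      k ∉ Finset.Icc ((n:ℤ) - N + 1) (n:ℤ) → G k = 0 := by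
    intro k hkU hk1
    by_cases hk2 : k ∈ Finset.Icc (-(δf:ℤ)) (δf:ℤ)
    swap
    · rw [hG]; simp only
      rw [mode_vanish hbandf hk2, zero_mul]
    by_cases hg : (n:ℤ) - (m:ℤ) - k ∈ Finset.Icc (-(δg:ℤ)) (δg:ℤ)
    swap
    · rw [hG]; simp only
      rw [mode_vanish hbandg hg, mul_zero]
    rw [hG]; simp only
    simp only [Finset.mem_Icc] at hk1 hk2 hg
    have hn : (n:ℤ) < N := by exact_mod_cast n.isLt
    have hm : (m:ℤ) < N := by exact_mod_cast m.isLt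
    have hn0 : (0:ℤ) ≤ (n:ℤ) := Int.ofNat_nonneg _
    have hm0 : (0:ℤ) ≤ (m:ℤ) := Int.ofNat_nonneg _
    have hδ : hb * δf ≤ 2 * εf := by
      rw [← hhbN] at hN2
      have hNpos : (0:ℝ) < N := by exact_mod_cast hN1
      have h' : hb * (δf:ℝ) * (N:ℝ) ≤ 2 * εf * (N:ℝ) := by linear_combination hN2
      exact le_of_mul_le_mul_right h' hNpos
    rcases (by omega : k ≤ (n:ℤ) - N ∨ (n:ℤ) < k) with hcase | hcase
    · -- l ≥ N side: z near a + L
      have hk0 : k ≠ 0 := by omega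
      rw [hεf k (by simp [Finset.mem_Icc]; omega) hk0 _ (Or.inr ?_), zero_mul]
      -- a + L - εf ≤ arg1
      have hbound : (2*(N:ℤ) - δf : ℤ) ≤ 2*(n:ℤ) - k + 2 := by omega
      have hbR : (2*(N:ℝ) - δf : ℝ) ≤ 2*(n.1:ℝ) - (k:ℝ) + 2 := by exact_mod_cast hbound
      have : a + (b-a)*β - εf ≤ a + hb/2 * (2*(N:ℝ) - δf) := by
        rw [← hhbN]
        nlinarith [hhb.le]
      refine le_trans this ?_
      have := mul_le_mul_of_nonneg_left hbR (by positivity : (0:ℝ) ≤ hb/2)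
      linarith
    · -- l < 0 side: z near a
      have hk0 : k ≠ 0 := by omega
      rw [hεf k (by simp [Finset.mem_Icc]; omega) hk0 _ (Or.inl ?_), zero_mul]
      have hbound : (2*(n:ℤ) - k + 2 : ℤ) ≤ δf := by omega
      have hbR : (2*(n.1:ℝ) - (k:ℝ) + 2 : ℝ) ≤ (δf:ℝ) := by exact_mod_cast hbound
      have := mul_le_mul_of_nonneg_left hbR (by positivity : (0:ℝ) ≤ hb/2)
      nlinarith
  have hvan2 : ∀ k ∈ Finset.Icc ((n:ℤ) - N + 1) (n:ℤ) ∪ Finset.Icc (-(δf:ℤ)) (δf:ℤ),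
      k ∉ Finset.Icc (-(δf:ℤ)) (δf:ℤ) → G k = 0 := by
    intro k _ hk2
    rw [hG]; simp only
    rw [mode_vanish hbandf hk2, zero_mul]
  rw [Finset.sum_subset Finset.subset_union_left hvan1,
    Finset.sum_subset Finset.subset_union_right hvan2]


lemma eps_exists (a L : ℝ) (f : ℝ × ℝ → ℂ) (δf : ℕ)
    (hsupp : ∀ k : ℤ, k ≠ 0 → ∃ K : Set ℝ, IsCompact K ∧ K ⊆ Set.Ioo a (a + L) ∧
      ∀ z : ℝ, z ∉ K → fourierMode f k z = 0) :
    ∃ ε : ℝ, 0 < ε ∧ ∀ k : ℤ, k ∈ Finset.Icc (-(δf:ℤ)) (δf:ℤ) → k ≠ 0 → ∀ z : ℝ,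
      (z ≤ a + ε ∨ a + L - ε ≤ z) → fourierMode f k z = 0 := by
  have hk1 : ∀ k : ℤ, ∃ ε : ℝ, 0 < ε ∧ (k ≠ 0 → ∀ z : ℝ,
      (z ≤ a + ε ∨ a + L - ε ≤ z) → fourierMode f k z = 0) := by
    intro k
    rcases eq_or_ne k 0 with hk | hk
    · exact ⟨1, one_pos, fun h => absurd hk h⟩
    obtain ⟨K, hKc, hKsub, hKvan⟩ := hsupp k hk
    rcases K.eq_empty_or_nonempty with hKe | hKne
    · exact ⟨1, one_pos, fun _ z _ => hKvan z (by simp [hKe])⟩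
    obtain ⟨α, hα⟩ := hKc.exists_isLeast hKne
    obtain ⟨ω, hω⟩ := hKc.exists_isGreatest hKne
    have hαIoo := hKsub hα.1
    have hωIoo := hKsub hω.1
    refine ⟨min (α - a) (a + L - ω) / 2, by
      have := hαIoo.1; have := hωIoo.2
      have h1 : 0 < α - a := by linarith
      have h2 : 0 < a + L - ω := by linarith
      positivity, fun _ z hz => hKvan z fun hzK => ?_⟩
    have hle1 : α ≤ z := hα.2 hzK
    have hle2 : z ≤ ω := hω.2 hzK
    have hm1 : min (α - a) (a + L - ω) ≤ α - a := min_le_left _ _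
    have hm2 : min (α - a) (a + L - ω) ≤ a + L - ω := min_le_right _ _
    have hαa : 0 < α - a := by linarith [hαIoo.1]
    have hωa : 0 < a + L - ω := by linarith [hωIoo.2]
    have hminpos : 0 < min (α - a) (a + L - ω) := lt_min hαa hωa
    rcases hz with hz | hz <;> linarith
  choose εfun hεpos hεvan using hk1
  have hIccne : (Finset.Icc (-(δf:ℤ)) (δf:ℤ)).Nonempty := ⟨0, by simp⟩
  refine ⟨(Finset.Icc (-(δf:ℤ)) (δf:ℤ)).inf' hIccne εfun, ?_, ?_⟩
  · rw [Finset.lt_inf'_iff]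
    exact fun k _ => hεpos k
  · intro k hk hk0 z hz
    have hle : (Finset.Icc (-(δf:ℤ)) (δf:ℤ)).inf' hIccne εfun ≤ εfun k :=
      Finset.inf'_le _ hk
    refine hεvan k hk0 z ?_
    rcases hz with hz | hz
    · exact Or.inl (by linarith)
    · exact Or.inr (by linarith)

lemma smallN_wrapper (q : ℕ → ℝ) (hq : ∀ N, 0 ≤ q N) (N₀ : ℕ) (C₁ : ℝ)
    (h : ∀ N : ℕ, N₀ ≤ N → 0 < N → q N ≤ C₁ / (N:ℝ)^2) :
    ∃ C : ℝ, ∀ N : ℕ, 0 < N → q N ≤ C / (N:ℝ)^2 := by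
  refine ⟨max C₁ 0 + ∑ M ∈ Finset.range N₀, (M:ℝ)^2 * q M, fun N hN => ?_⟩
  have hNpos : (0:ℝ) < (N:ℝ)^2 := by positivity
  have hsum0 : 0 ≤ ∑ M ∈ Finset.range N₀, (M:ℝ)^2 * q M :=
    Finset.sum_nonneg fun M _ => mul_nonneg (by positivity) (hq M)
  rcases le_or_gt N₀ N with hcase | hcase
  · refine le_trans (h N hcase hN) ?_
    rw [div_le_div_iff₀ hNpos hNpos]
    have hC1 : C₁ ≤ max C₁ 0 + ∑ M ∈ Finset.range N₀, (M:ℝ)^2 * q M := by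
      have := le_max_left C₁ (0:ℝ)
      linarith
    nlinarith
  · rw [le_div_iff₀ hNpos]
    have hkey : q N * (N:ℝ)^2 ≤ ∑ M ∈ Finset.range N₀, (M:ℝ)^2 * q M := by
      have := Finset.single_le_sum (f := fun M : ℕ => (M:ℝ)^2 * q M)
        (fun M _ => mul_nonneg (by positivity) (hq M)) (Finset.mem_range.mpr hcase)
      linarith
    have := le_max_right C₁ (0:ℝ)
    linarith



end Aux

/-- For f, g 2π-periodic in the second argument, bandlimited with
smooth modes, whose nonzero modes vanish outside a compact subset of
(a, a+(b−a)β), there is a constant C such that for every positive integer N,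
‖ T_N(f)T_N(g) − T_N(fg) − (iħ_N/2) T_N({f,g}) ‖ ≤ C/N². -/
theorem TN_product_norm (a b β : ℝ) (hab : a < b) (hβ : 0 < β)
    (f g : ℝ × ℝ → ℂ) (δf δg : ℕ)
    (hperf : Periodic2 f) (hperg : Periodic2 g)
    (hbandf : Bandlimited f δf) (hbandg : Bandlimited g δg)
    (hsmoothf : ∀ k : ℤ, ContDiff ℝ (⊤ : ℕ∞) (fourierMode f k))
    (hsmoothg : ∀ k : ℤ, ContDiff ℝ (⊤ : ℕ∞) (fourierMode g k))
    (hsuppf : ModesCompactlySupported a b β f)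
    (hsuppg : ModesCompactlySupported a b β g) :
    ∃ C : ℝ, ∀ N : ℕ, 0 < N →
      opNorm (TN a b β N f * TN a b β N g - TN a b β N (fun p => f p * g p)
          - ((Complex.I * (hbar a b β N : ℝ) / 2) • TN a b β N (pb f g)))
        ≤ C / (N : ℝ) ^ 2 := by
  classical
  have hL : 0 < (b - a) * β := mul_pos (by linarith) hβ
  obtain ⟨εf, hεpos, hεf⟩ := eps_exists a ((b - a) * β) f δf hsuppf
  choose Cf hCf using fun k k' : ℤ =>
    twoFunTaylor (fourierMode f k) (fourierMode g k') (hsmoothf k) (hsmoothg k')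
      ((b - a) * β * ((δf:ℝ) + (δg:ℝ) + 1)) a (a + (b - a) * β)
  set L : ℝ := (b - a) * β with hLdef
  set CC : ℝ := ∑ k ∈ Finset.Icc (-(δf:ℤ)) (δf:ℤ),
      ∑ k' ∈ Finset.Icc (-(δg:ℤ)) (δg:ℤ), Cf k k' with hCCdef
  have hCCnn : 0 ≤ CC :=
    Finset.sum_nonneg fun k _ => Finset.sum_nonneg fun k' _ => (hCf k k').1
  set W2 : ℝ := ((δf:ℝ) + (δg:ℝ) + 1)^2 with hW2def
  have hW2nn : 0 ≤ W2 := sq_nonneg _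
  apply smallN_wrapper _ (fun N => norm_nonneg _) (Nat.ceil (L * (δf:ℝ) / (2 * εf)))
    (((2*(δf+δg)+1 : ℕ) : ℝ) * (CC * W2 * L^2))
  intro N hN₀ hN
  have hNR : (0:ℝ) < N := by exact_mod_cast hN
  have hbpos : 0 < hbar a b β N := div_pos hL hNR
  set hb := hbar a b β N with hbdef
  have hhbN : hb * N = L := by
    rw [hbdef]; unfold hbar; field_simp; exact hLdef.symm
  have hbleL : hb ≤ L := by
    rw [hbdef]; unfold hbar
    rw [div_le_iff₀ hNR]
    nlinarith [hL, (by exact_mod_cast hN : (1:ℝ) ≤ (N:ℝ))]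
  have hb2 : hb^2 = L^2 / (N:ℝ)^2 := by
    rw [hbdef]; unfold hbar
    rw [div_pow]
  have hN2 : L * (δf:ℝ) ≤ 2 * εf * N := by
    have h1 : L * (δf:ℝ) / (2*εf) ≤ (N:ℝ) := by
      refine le_trans (Nat.le_ceil _) ?_
      exact_mod_cast hN₀
    rw [div_le_iff₀ (by positivity)] at h1
    linarith
  set D := TN a b β N f * TN a b β N g - TN a b β N (fun p => f p * g p)
      - ((Complex.I * (hb : ℝ) / 2) • TN a b β N (pb f g)) with hD
  show opNorm D ≤ ((2*(δf+δg)+1 : ℕ) : ℝ) * (CC * W2 * L^2) / (N:ℝ)^2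
  set d : Fin N → Fin N → ℤ := fun n m => (n:ℤ) - (m:ℤ) with hd
  set zB : Fin N → Fin N → ℝ := fun n m => a + hb/2 * ((n.1:ℝ) + (m.1:ℝ) + 2) with hzB
  set sB : Fin N → Fin N → ℤ → ℝ := fun n m k => hb/2 * ((n.1:ℝ) - (m.1:ℝ) - (k:ℝ)) with hsB
  set tB : ℤ → ℝ := fun k => -(hb/2 * (k:ℝ)) with htB
  set Ek : Fin N → Fin N → ℤ → ℂ := fun n m k =>
    fourierMode f k (zB n m + sB n m k) * fourierMode g (d n m - k) (zB n m + tB k)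
      - (fourierMode f k (zB n m) * fourierMode g (d n m - k) (zB n m)
        + (sB n m k : ℂ) * deriv (fourierMode f k) (zB n m) * fourierMode g (d n m - k) (zB n m)
        + (tB k : ℂ) * fourierMode f k (zB n m) * deriv (fourierMode g (d n m - k)) (zB n m))
    with hEk
  have hentry : ∀ n m : Fin N, D n m = ∑ k ∈ Finset.Icc (-(δf:ℤ)) (δf:ℤ), Ek n m k := by
    intro n m
    have hzNn : zN a b β N (n.1+1) (m.1+1) = zB n m := by
      unfold zN
      rw [← hbdef, hzB]
      simp only
      push_cast
      ring
    have h1 : D n m = (∑ l : Fin N, fourierMode f ((n:ℤ) - (l:ℤ)) (zN a b β N (n.1+1) (l.1+1))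
          * fourierMode g ((l:ℤ) - (m:ℤ)) (zN a b β N (l.1+1) (m.1+1)))
        - fourierMode (fun p => f p * g p) (d n m) (zB n m)
        - (Complex.I * (hb:ℝ) / 2) * fourierMode (pb f g) (d n m) (zB n m) := by
      rw [hD]
      simp only [Matrix.sub_apply, Matrix.smul_apply, Matrix.mul_apply, TN,
        Matrix.of_apply, smul_eq_mul, hzNn, hd]
    rw [h1, exact_sum a b β hL f g δf δg hbandf hbandg εf hεpos hεf N hN hN2 n m,
      mode_mul hbandf hbandg, mode_pb hbandf hbandg hsmoothf hsmoothg,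
      Finset.mul_sum, ← Finset.sum_sub_distrib, ← Finset.sum_sub_distrib]
    rw [← hbdef]
    refine Finset.sum_congr rfl fun k hk => ?_
    have e1 : a + hb/2 * (2*(n.1:ℝ) - (k:ℝ) + 2) = zB n m + sB n m k := by
      rw [hzB, hsB]; simp only; ring
    have e2 : a + hb/2 * ((n.1:ℝ) - (k:ℝ) + (m.1:ℝ) + 2) = zB n m + tB k := by
      rw [hzB, htB]; simp only; ring
    rw [e1, e2, hEk]
    simp only [hd, hsB, htB]
    push_cast
    linear_combination ((hb:ℂ)/2 * (((n.1:ℕ):ℂ) - ((m.1:ℕ):ℂ) - (k:ℂ))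
        * deriv (fourierMode f k) (zB n m) * fourierMode g ((n:ℤ) - (m:ℤ) - k) (zB n m)
      - (hb:ℂ)/2 * (k:ℂ) * fourierMode f k (zB n m)
        * deriv (fourierMode g ((n:ℤ) - (m:ℤ) - k)) (zB n m)) * Complex.I_mul_I
  have hEk0 : ∀ (n m : Fin N) (k : ℤ), d n m - k ∉ Finset.Icc (-(δg:ℤ)) (δg:ℤ) →
      Ek n m k = 0 := by
    intro n m k hgk
    have h0 : fourierMode g (d n m - k) = fun _ => 0 :=
      funext fun z => mode_vanish hbandg hgk z
    rw [hEk]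
    simp only [h0]
    simp
  have hEkbound : ∀ (n m : Fin N) (k : ℤ), k ∈ Finset.Icc (-(δf:ℤ)) (δf:ℤ) →
      ‖Ek n m k‖ ≤ (∑ k' ∈ Finset.Icc (-(δg:ℤ)) (δg:ℤ), Cf k k') * (W2 * (L^2/(N:ℝ)^2)) := by
    intro n m k hk
    have hsumnn : 0 ≤ ∑ k' ∈ Finset.Icc (-(δg:ℤ)) (δg:ℤ), Cf k k' :=
      Finset.sum_nonneg fun k' _ => (hCf k k').1
    by_cases hgk : d n m - k ∈ Finset.Icc (-(δg:ℤ)) (δg:ℤ)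
    swap
    · rw [hEk0 n m k hgk, norm_zero]
      have : (0:ℝ) ≤ W2 * (L^2/(N:ℝ)^2) := by positivity
      exact mul_nonneg hsumnn this
    -- in band
    have hkabs : |k| ≤ (δf:ℤ) := by
      simp only [Finset.mem_Icc] at hk; rw [abs_le]; omega
    have hgabs : |d n m - k| ≤ (δg:ℤ) := by
      simp only [Finset.mem_Icc] at hgk; rw [abs_le]; omega
    have hn : (n.1:ℝ) ≤ (N:ℝ) - 1 := by
      have h' : (n.1:ℝ) + 1 ≤ (N:ℝ) := by exact_mod_cast n.isLt
      linarith
    have hm : (m.1:ℝ) ≤ (N:ℝ) - 1 := by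
      have h' : (m.1:ℝ) + 1 ≤ (N:ℝ) := by exact_mod_cast m.isLt
      linarith
    have hn0 : (0:ℝ) ≤ (n.1:ℝ) := Nat.cast_nonneg _
    have hm0 : (0:ℝ) ≤ (m.1:ℝ) := Nat.cast_nonneg _
    have hscast : |(n.1:ℝ) - (m.1:ℝ) - (k:ℝ)| ≤ (δg:ℝ) := by
      have : ((|d n m - k| : ℤ) : ℝ) ≤ ((δg:ℤ) : ℝ) := by exact_mod_cast hgabs
      rw [hd] at this
      push_cast at this
      convert this using 2 <;> push_cast <;> ring
    have htcast : |(k:ℝ)| ≤ (δf:ℝ) := by exact_mod_cast hkabs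
    have hsabs : |sB n m k| ≤ L * ((δf:ℝ) + (δg:ℝ) + 1) := by
      rw [hsB]
      simp only
      rw [abs_mul, abs_of_nonneg (by positivity : (0:ℝ) ≤ hb/2)]
      have h1 : hb/2 * |(n.1:ℝ) - (m.1:ℝ) - (k:ℝ)| ≤ hb/2 * (δg:ℝ) :=
        mul_le_mul_of_nonneg_left hscast (by positivity)
      refine le_trans h1 ?_
      nlinarith [hbpos.le, Nat.cast_nonneg (α := ℝ) δf, Nat.cast_nonneg (α := ℝ) δg, hL.le]
    have htabs : |tB k| ≤ L * ((δf:ℝ) + (δg:ℝ) + 1) := by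
      rw [htB]
      simp only [abs_neg]
      rw [abs_mul, abs_of_nonneg (by positivity : (0:ℝ) ≤ hb/2)]
      have h1 : hb/2 * |(k:ℝ)| ≤ hb/2 * (δf:ℝ) :=
        mul_le_mul_of_nonneg_left htcast (by positivity)
      refine le_trans h1 ?_
      nlinarith [hbpos.le, Nat.cast_nonneg (α := ℝ) δf, Nat.cast_nonneg (α := ℝ) δg, hL.le]
    have hzmem : zB n m ∈ Set.Icc a (a + L) := by
      rw [hzB]
      simp only
      constructor
      · nlinarith [hbpos.le]
      · have h2N : (n.1:ℝ) + (m.1:ℝ) + 2 ≤ 2*(N:ℝ) := by linarith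
        nlinarith [hbpos.le, hhbN]
    have hmain := (hCf k (d n m - k)).2 (zB n m) (sB n m k) (tB k) hsabs htabs hzmem
    have hEkval : ‖Ek n m k‖ ≤ Cf k (d n m - k) * (sB n m k^2 + tB k^2) := by
      rw [hEk]
      exact hmain
    refine le_trans hEkval ?_
    have hst : sB n m k^2 + tB k^2 ≤ W2 * (L^2/(N:ℝ)^2) := by
      rw [← hb2, hW2def]
      have hs2 : sB n m k^2 ≤ (hb/2 * (δg:ℝ))^2 := by
        rw [← sq_abs (sB n m k)]
        apply pow_le_pow_left₀ (abs_nonneg _)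
        rw [hsB]; simp only
        rw [abs_mul, abs_of_nonneg (by positivity : (0:ℝ) ≤ hb/2)]
        exact mul_le_mul_of_nonneg_left hscast (by positivity)
      have ht2 : tB k^2 ≤ (hb/2 * (δf:ℝ))^2 := by
        rw [← sq_abs (tB k)]
        apply pow_le_pow_left₀ (abs_nonneg _)
        rw [htB]; simp only [abs_neg]
        rw [abs_mul, abs_of_nonneg (by positivity : (0:ℝ) ≤ hb/2)]
        exact mul_le_mul_of_nonneg_left htcast (by positivity)
      have haux : (δg:ℝ)^2 + (δf:ℝ)^2 ≤ 4 * ((δf:ℝ)+(δg:ℝ)+1)^2 := by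
        nlinarith [Nat.cast_nonneg (α := ℝ) δf, Nat.cast_nonneg (α := ℝ) δg,
          mul_nonneg (Nat.cast_nonneg (α := ℝ) δf) (Nat.cast_nonneg (α := ℝ) δg)]
      calc sB n m k^2 + tB k^2 ≤ hb^2/4 * (δg:ℝ)^2 + hb^2/4 * (δf:ℝ)^2 := by
            nlinarith [hs2, ht2]
      _ = hb^2/4 * ((δg:ℝ)^2 + (δf:ℝ)^2) := by ring
      _ ≤ hb^2/4 * (4 * ((δf:ℝ)+(δg:ℝ)+1)^2) :=
            mul_le_mul_of_nonneg_left haux (by positivity)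
      _ = ((δf:ℝ)+(δg:ℝ)+1)^2 * hb^2 := by ring
    have hCle : Cf k (d n m - k) ≤ ∑ k' ∈ Finset.Icc (-(δg:ℤ)) (δg:ℤ), Cf k k' :=
      Finset.single_le_sum (fun k' _ => (hCf k k').1) hgk
    exact mul_le_mul hCle hst (by positivity) hsumnn
  have hbandD : ∀ n m : Fin N, ((δf+δg : ℕ):ℤ) < |(n:ℤ) - (m:ℤ)| → D n m = 0 := by
    intro n m hdist
    rw [hentry n m]
    refine Finset.sum_eq_zero fun k hk => hEk0 n m k ?_
    simp only [Finset.mem_Icc] at hk ⊢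
    rw [hd]
    simp only
    rcases lt_abs.mp hdist with h | h <;> push_cast at h <;> omega
  have hcD : ∀ n m : Fin N, ‖D n m‖ ≤ CC * (W2 * (L^2/(N:ℝ)^2)) := by
    intro n m
    rw [hentry n m]
    refine le_trans (norm_sum_le _ _) ?_
    refine le_trans (Finset.sum_le_sum fun k hk => hEkbound n m k hk) ?_
    rw [← Finset.sum_mul, hCCdef]
  have hfinal := opNorm_banded D (δf+δg) (CC * (W2 * (L^2/(N:ℝ)^2)))
    (by positivity) hbandD hcD
  refine le_trans hfinal ?_
  rw [div_eq_mul_inv, div_eq_mul_inv]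
  ring_nf
  rfl
end

section
/- Let f : ℝ × ℝ → ℂ be 2π-periodic and continuously differentiable in its second argument and continuous, and let D_N be the N×N diagonal matrix with diagonal entries z_N(n,n) (i.e. D_N = T_N(w) for w(z,θ) = z). Then for every positive integer N the exact identity [D_N, T_N(f)] = −iħ_N T_N(∂_θ f) holds, where ∂_θ f denotes the derivative of f in its second argument; equivalently, [T_N(w), T_N(f)] = iħ_N T_N({w,f}). -/
/-! Multiplying by `z` is diagonal in the quantization: the symbol `w(z, θ) = z` has only the
Fourier mode `0`, so `T_N(w)` is the diagonal matrix of the values `z_N(n, n)`. Commuting it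
with `T_N(f)` multiplies the `(n, m)` entry by `z_N(n, n) - z_N(m, m) = ħ_N (n - m)`, while
integration by parts over a period turns the `k`-th Fourier mode of `∂_θ f` into `i k f_k`.
With `k = n - m` the two factors match, and `{w, f} = -∂_θ f` gives the second form. -/

open Complex intervalIntegral

lemma exp_neg_I_mul_int_mul_two_pi (k : ℤ) :
    exp (-(I * k * ((2 * Real.pi : ℝ) : ℂ))) = 1 := by
  rw [← exp_int_mul_two_pi_mul_I (-k)]
  push_cast
  ring_nf

lemma hasDerivAt_exp_neg_mul_ofReal (c : ℂ) (θ : ℝ) :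
    HasDerivAt (fun t : ℝ => exp (-(c * t))) (-c * exp (-(c * θ))) θ := by
  have h := (((hasDerivAt_id (θ : ℂ)).const_mul (-c)).cexp).comp_ofReal
  simpa [mul_comm, neg_mul] using h

lemma integral_exp_neg_I_mul_int_mul (k : ℤ) :
    ∫ θ in (0 : ℝ)..2 * Real.pi, exp (-(I * k * θ))
      = if k = 0 then (2 * Real.pi : ℂ) else 0 := by
  split_ifs with hk
  · simp [hk]
  · have hc : -(I * k) ≠ 0 := by simp [I_ne_zero, hk]
    have h := integral_exp_mul_complex (a := 0) (b := 2 * Real.pi) hc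
    simp only [neg_mul] at h ⊢
    rw [h]
    have := exp_neg_I_mul_int_mul_two_pi k
    push_cast at this
    simp [this]

lemma integral_deriv_mul_exp_neg_I_mul_int_mul {g g' : ℝ → ℂ}
    (hg : ∀ θ ∈ Set.uIcc 0 (2 * Real.pi), HasDerivAt g (g' θ) θ)
    (hg' : IntervalIntegrable g' MeasureTheory.volume 0 (2 * Real.pi))
    (hper : g (2 * Real.pi) = g 0) (k : ℤ) :
    ∫ θ in (0 : ℝ)..2 * Real.pi, g' θ * exp (-(I * k * θ))
      = I * k * ∫ θ in (0 : ℝ)..2 * Real.pi, g θ * exp (-(I * k * θ)) := by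
  have hexp' : Continuous fun θ : ℝ => -(I * k) * exp (-(I * k * θ)) := by fun_prop
  have hparts := integral_mul_deriv_eq_deriv_mul hg
    (fun θ _ => hasDerivAt_exp_neg_mul_ofReal (I * k) θ) hg' (hexp'.intervalIntegrable _ _)
  have hpull : ∫ θ in (0 : ℝ)..2 * Real.pi, g θ * (-(I * k) * exp (-(I * k * θ)))
      = -(I * k) * ∫ θ in (0 : ℝ)..2 * Real.pi, g θ * exp (-(I * k * θ)) := by
    rw [← integral_const_mul]
    congr 1 with θ
    ring
  rw [hpull, hper, exp_neg_I_mul_int_mul_two_pi] at hparts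
  simp only [ofReal_zero, mul_zero, neg_zero, exp_zero, mul_one, sub_self, zero_sub] at hparts
  linear_combination hparts

lemma fourierMode_pθ {f : ℝ × ℝ → ℂ} (hper : Periodic2 f) {z : ℝ}
    (hf : ContDiff ℝ 1 (fun θ => f (z, θ))) (k : ℤ) :
    fourierMode (pθ f) k z = I * k * fourierMode f k z := by
  have hderiv : ∀ θ ∈ Set.uIcc 0 (2 * Real.pi),
      HasDerivAt (fun t => f (z, t)) (pθ f (z, θ)) θ := fun θ _ =>
    ((hf.differentiable one_ne_zero) θ).hasDerivAt
  have hcont : Continuous fun θ => pθ f (z, θ) := hf.continuous_deriv le_rfl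
  have hbdry : f (z, 2 * Real.pi) = f (z, 0) := by simpa using hper z 0
  unfold fourierMode
  rw [integral_deriv_mul_exp_neg_I_mul_int_mul hderiv (hcont.intervalIntegrable _ _) hbdry]
  ring

lemma fourierMode_comp_fst (g : ℝ → ℂ) (k : ℤ) (z : ℝ) :
    fourierMode (fun p => g p.1) k z = if k = 0 then g z else 0 := by
  have hπ : (Real.pi : ℂ) ≠ 0 := ofReal_ne_zero.mpr Real.pi_ne_zero
  unfold fourierMode
  dsimp only
  rw [integral_const_mul, integral_exp_neg_I_mul_int_mul]
  split_ifs
  · field_simp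
  · simp

lemma fourierMode_neg (f : ℝ × ℝ → ℂ) (k : ℤ) (z : ℝ) :
    fourierMode (fun p => -f p) k z = -fourierMode f k z := by
  simp only [fourierMode, neg_mul, integral_neg, mul_neg]

lemma Matrix.diagonal_mul_sub_mul_diagonal_apply {n R : Type*} [Fintype n] [DecidableEq n]
    [CommRing R] (d : n → R) (A : Matrix n n R) (i j : n) :
    (diagonal d * A - A * diagonal d) i j = (d i - d j) * A i j := by
  rw [sub_apply, diagonal_mul, mul_diagonal]
  ring

lemma pb_fst_left (f : ℝ × ℝ → ℂ) : pb (fun p => (p.1 : ℂ)) f = fun p => -pθ f p := by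
  funext p
  have hz : deriv (fun t : ℝ => (t : ℂ)) p.1 = 1 :=
    (hasDerivAt_id p.1).ofReal_comp.deriv.trans ofReal_one
  simp [pb, pθ, pz, hz]

section TN

variable (a b β : ℝ) (N : ℕ)

lemma zN_sub_zN (n m : ℕ) :
    zN a b β N n n - zN a b β N m m = hbar a b β N * ((n : ℝ) - m) := by
  simp only [zN]
  ring

lemma TN_neg (f : ℝ × ℝ → ℂ) : TN a b β N (fun p => -f p) = -TN a b β N f := by
  ext n m
  simp only [TN, Matrix.of_apply, Matrix.neg_apply, fourierMode_neg]

lemma TN_comp_fst (g : ℝ → ℂ) :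
    TN a b β N (fun p => g p.1)
      = Matrix.diagonal fun n => g (zN a b β N (n.1 + 1) (n.1 + 1)) := by
  ext n m
  simp only [TN, Matrix.of_apply, Matrix.diagonal_apply, fourierMode_comp_fst, sub_eq_zero,
    Int.natCast_inj, Fin.val_inj]
  split_ifs with h
  · rw [h]
  · rfl

lemma commutator_TN_fst {f : ℝ × ℝ → ℂ} (hper : Periodic2 f)
    (hC1 : ∀ z : ℝ, ContDiff ℝ 1 (fun θ => f (z, θ))) :
    TN a b β N (fun p => (p.1 : ℂ)) * TN a b β N f
        - TN a b β N f * TN a b β N (fun p => (p.1 : ℂ))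
      = (-(I * (hbar a b β N : ℝ))) • TN a b β N (pθ f) := by
  rw [TN_comp_fst]
  ext n m
  rw [Matrix.diagonal_mul_sub_mul_diagonal_apply, ← ofReal_sub, zN_sub_zN]
  simp only [TN, Matrix.of_apply, Matrix.smul_apply, smul_eq_mul, fourierMode_pθ hper (hC1 _)]
  push_cast
  linear_combination ((hbar a b β N : ℂ) * ((n.1 : ℂ) - m.1)
    * fourierMode f (n.1 - m.1) (zN a b β N (n.1 + 1) (m.1 + 1))) * I_mul_I

end TN

theorem commutator_with_z_exact_general (a b β : ℝ)
    (f : ℝ × ℝ → ℂ) (hper : Periodic2 f)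
    (hC1 : ∀ z : ℝ, ContDiff ℝ 1 (fun θ => f (z, θ)))
    (N : ℕ) :
    (TN a b β N (fun p => (p.1 : ℂ)) * TN a b β N f
        - TN a b β N f * TN a b β N (fun p => (p.1 : ℂ))
      = (-(Complex.I * (hbar a b β N : ℝ))) • TN a b β N (pθ f)) ∧
    (TN a b β N (fun p => (p.1 : ℂ)) * TN a b β N f
        - TN a b β N f * TN a b β N (fun p => (p.1 : ℂ))
      = (Complex.I * (hbar a b β N : ℝ)) • TN a b β N (pb (fun p => (p.1 : ℂ)) f)) := by
  refine ⟨commutator_TN_fst a b β N hper hC1, ?_⟩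
  rw [commutator_TN_fst a b β N hper hC1, pb_fst_left, TN_neg, smul_neg, neg_smul]

/-- For f continuous, 2π-periodic and C¹ in its second argument,
and D_N = T_N(w) with w(z,θ) = z, the exact identity
[D_N, T_N(f)] = −iħ_N T_N(∂_θ f) holds; equivalently,
[T_N(w), T_N(f)] = iħ_N T_N({w,f}). -/
theorem commutator_with_z_exact (a b β : ℝ) (hab : a < b) (hβ : 0 < β)
    (f : ℝ × ℝ → ℂ) (hcont : Continuous f) (hper : Periodic2 f)
    (hC1 : ∀ z : ℝ, ContDiff ℝ 1 (fun θ => f (z, θ)))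
    (N : ℕ) (hN : 0 < N) :
    (TN a b β N (fun p => (p.1 : ℂ)) * TN a b β N f
        - TN a b β N f * TN a b β N (fun p => (p.1 : ℂ))
      = (-(Complex.I * (hbar a b β N : ℝ))) • TN a b β N (pθ f)) ∧
    (TN a b β N (fun p => (p.1 : ℂ)) * TN a b β N f
        - TN a b β N f * TN a b β N (fun p => (p.1 : ℂ))
      = (Complex.I * (hbar a b β N : ℝ)) • TN a b β N (pb (fun p => (p.1 : ℂ)) f)) :=
  commutator_with_z_exact_general a b β f hper hC1 N
end

section
/- Let r : ℝ → ℝ be smooth, let x(z,θ) = r(z) cos θ, y(z,θ) = r(z) sin θ, w(z,θ) = z, and set X_N = T_N(x), Y_N = T_N(y), Z_N = T_N(w). Let G_N be the diagonal N×N matrix with diagonal entries r(z_N(n,n))² (1 + r'(z_N(n,n))²), i.e. G_N = T_N of the function (z,θ) ↦ r(z)²(1+r'(z)²). Then there is a constant C such that for every positive integer N and all indices n,m ∈ {1,…,N} with 4 < n, m ≤ N − 4, one has | ( −ħ_N^{−2} ( [X_N,Y_N]² + [X_N,Z_N]² + [Y_N,Z_N]² ) − G_N )_{n,m} | ≤ C/N².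 -/
noncomputable section

/-- Matrix commutator [A,B] = AB − BA. -/
def Com {N : ℕ} (A B : Matrix (Fin N) (Fin N) ℂ) : Matrix (Fin N) (Fin N) ℂ :=
  A * B - B * A

end

lemma intExp (k : ℤ) : (∫ θ in (0:ℝ)..(2*Real.pi), Complex.exp (Complex.I * k * θ))
    = if k = 0 then (2*Real.pi : ℂ) else 0 := by
  rcases eq_or_ne k 0 with h | h
  · simp [h]
  · have hc : Complex.I * k ≠ 0 := by
      simp [Complex.I_ne_zero, Complex.ext_iff, h]
    rw [if_neg h, show (fun θ : ℝ => Complex.exp (Complex.I * (k:ℂ) * θ))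
        = fun θ : ℝ => Complex.exp ((Complex.I * k) * θ) by funext θ; ring_nf,
      integral_exp_mul_complex hc]
    have h1 : Complex.exp (Complex.I * k * ((2*Real.pi:ℝ):ℂ)) = 1 := by
      rw [show Complex.I * k * ((2*Real.pi:ℝ):ℂ) = (k:ℂ) * (2*Real.pi*Complex.I) by push_cast; ring]
      exact Complex.exp_int_mul_two_pi_mul_I k
    rw [h1]
    simp

lemma contExp (m : ℤ) : Continuous (fun θ:ℝ => Complex.exp (Complex.I * m * θ)) :=
  (continuous_const.mul Complex.continuous_ofReal).cexp

lemma fmGen (c1 c2 : ℂ) (j1 j2 : ℤ) (f : ℝ×ℝ→ℂ) (k : ℤ) (z : ℝ)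
    (hf : ∀ θ:ℝ, f (z,θ) = c1 * Complex.exp (Complex.I*j1*θ) + c2 * Complex.exp (Complex.I*j2*θ)) :
    fourierMode f k z = (if j1 = k then c1 else 0) + (if j2 = k then c2 else 0) := by
  have key : ∀ θ:ℝ, f (z,θ) * Complex.exp (-(Complex.I*k*θ))
      = c1*Complex.exp (Complex.I*((j1-k:ℤ))*θ) + c2*Complex.exp (Complex.I*((j2-k:ℤ))*θ) := by
    intro θ
    have e1 : Complex.exp (Complex.I*((j1-k:ℤ):ℂ)*θ)
        = Complex.exp (Complex.I*j1*θ) * Complex.exp (-(Complex.I*k*θ)) := by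
      rw [← Complex.exp_add]; congr 1; push_cast; ring
    have e2 : Complex.exp (Complex.I*((j2-k:ℤ):ℂ)*θ)
        = Complex.exp (Complex.I*j2*θ) * Complex.exp (-(Complex.I*k*θ)) := by
      rw [← Complex.exp_add]; congr 1; push_cast; ring
    rw [hf θ, e1, e2]; ring
  unfold fourierMode
  rw [intervalIntegral.integral_congr (g := fun θ:ℝ => c1*Complex.exp (Complex.I*((j1-k:ℤ))*θ)
        + c2*Complex.exp (Complex.I*((j2-k:ℤ))*θ)) (fun θ _ => key θ)]
  rw [intervalIntegral.integral_add (f := fun θ:ℝ => c1*Complex.exp (Complex.I*((j1-k:ℤ))*θ))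
      (g := fun θ:ℝ => c2*Complex.exp (Complex.I*((j2-k:ℤ))*θ)) ((continuous_const.mul (contExp _)).intervalIntegrable _ _)
      ((continuous_const.mul (contExp _)).intervalIntegrable _ _),
    intervalIntegral.integral_const_mul, intervalIntegral.integral_const_mul, intExp, intExp]
  have hπ : (2*Real.pi:ℂ) ≠ 0 := by
    simp [Complex.ext_iff, Real.pi_ne_zero]
  have hπ' : ((Real.pi:ℂ)) ≠ 0 := Complex.ofReal_ne_zero.2 Real.pi_ne_zero
  rcases eq_or_ne j1 k with h1 | h1 <;> rcases eq_or_ne j2 k with h2 | h2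
  · rw [if_pos h1, if_pos h2, if_pos (sub_eq_zero.2 h1), if_pos (sub_eq_zero.2 h2)]
    field_simp
  · rw [if_pos h1, if_neg h2, if_pos (sub_eq_zero.2 h1), if_neg (sub_ne_zero.2 h2)]
    field_simp
    ring
  · rw [if_neg h1, if_pos h2, if_neg (sub_ne_zero.2 h1), if_pos (sub_eq_zero.2 h2)]
    field_simp
    ring
  · rw [if_neg h1, if_neg h2, if_neg (sub_ne_zero.2 h1), if_neg (sub_ne_zero.2 h2)]
    simp

lemma int_sq_one (d : ℤ) : d^2 = 1 ↔ d = 1 ∨ d = -1 := by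
  constructor
  · intro h
    have h' : (d - 1) * (d + 1) = 0 := by linear_combination h
    rcases mul_eq_zero.1 h' with h'' | h'' <;> omega
  · rintro (rfl | rfl) <;> norm_num

lemma cosExp (θ : ℝ) : (Complex.cos θ)
    = Complex.exp (Complex.I*((1:ℤ):ℂ)*θ)/2 + Complex.exp (Complex.I*((-1:ℤ):ℂ)*θ)/2 := by
  simp only [Complex.cos]
  rw [show ((θ:ℂ))*Complex.I = Complex.I*((1:ℤ):ℂ)*θ by push_cast; ring,
    show (-(θ:ℂ))*Complex.I = Complex.I*((-1:ℤ):ℂ)*θ by push_cast; ring]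
  ring

lemma sinExp (θ : ℝ) : (Complex.sin θ)
    = Complex.I*Complex.exp (Complex.I*((-1:ℤ):ℂ)*θ)/2
      - Complex.I*Complex.exp (Complex.I*((1:ℤ):ℂ)*θ)/2 := by
  unfold Complex.sin
  rw [show ((θ:ℂ))*Complex.I = Complex.I*((1:ℤ):ℂ)*θ by push_cast; ring,
    show (-(θ:ℂ))*Complex.I = Complex.I*((-1:ℤ):ℂ)*θ by push_cast; ring]
  ring

lemma two_point {N : ℕ} (f : Fin N → ℂ) (n : Fin N) (h1 : 0 < n.1) (h2 : n.1 + 1 < N)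
    (hf : ∀ k : Fin N, k.1 + 1 ≠ n.1 → k.1 ≠ n.1 + 1 → f k = 0) :
    ∑ k, f k = f ⟨n.1 - 1, by omega⟩ + f ⟨n.1 + 1, h2⟩ := by
  have hne : (⟨n.1 - 1, by omega⟩ : Fin N) ≠ ⟨n.1 + 1, h2⟩ := by
    simp only [ne_eq, Fin.mk.injEq]; omega
  rw [← Finset.sum_pair hne]
  refine (Finset.sum_subset (Finset.subset_univ _) ?_).symm
  intro k _ hk
  simp only [Finset.mem_insert, Finset.mem_singleton, Fin.ext_iff] at hk
  push_neg at hk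
  exact hf k (by omega) (by omega)

lemma mvtAbs (F : ℝ → ℝ) (lo hi M : ℝ) (hF : Differentiable ℝ F)
    (hM : ∀ x ∈ Set.Icc lo hi, |deriv F x| ≤ M) :
    ∀ u v, u ∈ Set.Icc lo hi → v ∈ Set.Icc lo hi → |F v - F u| ≤ M * |v - u| := by
  intro u v hu hv
  have := (convex_Icc lo hi).norm_image_sub_le_of_norm_deriv_le
      (fun x _ => (hF x)) (fun x hx => by rw [Real.norm_eq_abs]; exact hM x hx) hu hv
  simpa [Real.norm_eq_abs] using this

lemma segAbs (f f' : ℝ → ℝ) (h C : ℝ) (h0 : 0 ≤ h)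
    (hd : ∀ t ∈ Set.Icc (0:ℝ) h, HasDerivAt f (f' t) t)
    (hb : ∀ t ∈ Set.Ico (0:ℝ) h, |f' t| ≤ C) : |f h - f 0| ≤ C * h := by
  have := norm_image_sub_le_of_norm_deriv_le_segment' (f := f) (f' := f') (a := 0) (b := h)
      (fun t ht => (hd t ht).hasDerivWithinAt)
      (fun t ht => by rw [Real.norm_eq_abs]; exact hb t ht) h (Set.right_mem_Icc.2 h0)
  simpa [Real.norm_eq_abs] using this

lemma dplusD (F : ℝ → ℝ) (hF : Differentiable ℝ F) (w t : ℝ) :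
    HasDerivAt (fun s => F (w + s)) (deriv F (w + t)) t := by
  simpa [Function.comp_def] using ((hF (w + t)).hasDerivAt.comp t ((hasDerivAt_id t).const_add w))

lemma dminusD (F : ℝ → ℝ) (hF : Differentiable ℝ F) (w t : ℝ) :
    HasDerivAt (fun s => F (w - s)) (-deriv F (w - t)) t := by
  simpa [Function.comp_def] using ((hF (w - t)).hasDerivAt.comp t ((hasDerivAt_id t).const_sub w))

lemma taylorBounds (F : ℝ → ℝ) (lo hi M1 M2 M3 : ℝ)
    (hF : Differentiable ℝ F) (hF1 : Differentiable ℝ (deriv F))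
    (hF2 : Differentiable ℝ (deriv (deriv F)))
    (hM1 : ∀ x ∈ Set.Icc lo hi, |deriv F x| ≤ M1)
    (hM2 : ∀ x ∈ Set.Icc lo hi, |deriv (deriv F) x| ≤ M2)
    (hM3 : ∀ x ∈ Set.Icc lo hi, |deriv (deriv (deriv F)) x| ≤ M3)
    (w h : ℝ) (h0 : 0 ≤ h) (hwl : lo ≤ w - h) (hwh : w + h ≤ hi) :
    |F (w+h) - F (w-h)| ≤ 2*M1*h ∧
    |F (w+h) - F (w-h) - 2*h*deriv F w| ≤ 2*M3*h^3 ∧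
    |F (w+h) + F (w-h) - 2*F w| ≤ 2*M2*h^2 := by
  have hM3nn : 0 ≤ M3 := le_trans (abs_nonneg _) (hM3 w ⟨by linarith, by linarith⟩)
  have hM2nn : 0 ≤ M2 := le_trans (abs_nonneg _) (hM2 w ⟨by linarith, by linarith⟩)
  have hwmem : ∀ t : ℝ, 0 ≤ t → t ≤ h → (w + t ∈ Set.Icc lo hi ∧ w - t ∈ Set.Icc lo hi) := by
    intro t ht0 hth
    exact ⟨⟨by linarith, by linarith⟩, ⟨by linarith, by linarith⟩⟩
  refine ⟨?_, ?_, ?_⟩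
  · have := mvtAbs F lo hi M1 hF hM1 (w-h) (w+h) (hwmem h h0 le_rfl).2 (hwmem h h0 le_rfl).1
    calc |F (w+h) - F (w-h)| ≤ M1 * |w+h - (w-h)| := this
      _ = 2*M1*h := by
          rw [show w+h-(w-h) = 2*h by ring, abs_of_nonneg (by linarith)]; ring
  · -- second-order symmetric difference of the derivative
    have inner : ∀ t, 0 ≤ t → t ≤ h →
        |deriv F (w+t) + deriv F (w-t) - 2*deriv F w| ≤ (2*M3*h)*t := by
      intro t ht0 hth
      have hseg := segAbs (fun s => deriv F (w+s) + deriv F (w-s))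
          (fun s => deriv (deriv F) (w+s) + -deriv (deriv F) (w-s)) t (2*M3*h) ht0
          (fun s hs => (dplusD (deriv F) hF1 w s).add (dminusD (deriv F) hF1 w s))
          (fun s hs => by
            have hs0 : 0 ≤ s := hs.1
            have hsh : s ≤ h := by have := hs.2; linarith
            have := mvtAbs (deriv (deriv F)) lo hi M3 hF2 hM3 (w-s) (w+s)
                (hwmem s hs0 hsh).2 (hwmem s hs0 hsh).1
            have e : |w+s - (w-s)| = 2*s := by
              rw [show w+s-(w-s) = 2*s by ring, abs_of_nonneg (by linarith)]
            rw [e] at this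
            calc |deriv (deriv F) (w+s) + -deriv (deriv F) (w-s)|
                = |deriv (deriv F) (w+s) - deriv (deriv F) (w-s)| := by ring_nf
              _ ≤ M3 * (2*s) := this
              _ ≤ 2*M3*h := by nlinarith [hM3nn])
      have e0 : (fun s => deriv F (w+s) + deriv F (w-s)) 0 = 2*deriv F w := by
        norm_num; ring
      have et : (fun s => deriv F (w+s) + deriv F (w-s)) t
          = deriv F (w+t) + deriv F (w-t) := rfl
      rw [show deriv F (w + 0) + deriv F (w - 0) = 2 * deriv F w from e0] at hseg
      linarith [hseg]
    have hseg2 := segAbs (fun t => F (w+t) - F (w-t) - t*(2*deriv F w))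
        (fun t => deriv F (w+t) - -deriv F (w-t) - 2*deriv F w) h (2*M3*h^2) h0
        (fun t ht => ((dplusD F hF w t).sub (dminusD F hF w t)).sub
          (by simpa using (hasDerivAt_mul_const (2*deriv F w) (x := t))))
        (fun t ht => by
          have h1 := inner t ht.1 (le_of_lt ht.2)
          have e : deriv F (w+t) - -deriv F (w-t) - 2*deriv F w
              = deriv F (w+t) + deriv F (w-t) - 2*deriv F w := by ring
          rw [e]
          calc |deriv F (w+t) + deriv F (w-t) - 2*deriv F w| ≤ (2*M3*h)*t := h1
            _ ≤ 2*M3*h^2 := by nlinarith [mul_nonneg (mul_nonneg (by linarith : (0:ℝ) ≤ 2*M3) h0) (by linarith [ht.2] : (0:ℝ) ≤ h - t)])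
      
    have e0 : (fun t => F (w+t) - F (w-t) - t*(2*deriv F w)) 0 = 0 := by norm_num
    have eh : (fun t => F (w+t) - F (w-t) - t*(2*deriv F w)) h
        = F (w+h) - F (w-h) - 2*h*deriv F w := by norm_num; ring
    rw [show F (w + h) - F (w - h) - h * (2 * deriv F w) = F (w+h) - F (w-h) - 2*h*deriv F w from eh,
      show F (w + 0) - F (w - 0) - 0 * (2 * deriv F w) = 0 from e0, sub_zero] at hseg2
    calc |F (w+h) - F (w-h) - 2*h*deriv F w| ≤ (2*M3*h^2)*h := hseg2
      _ = 2*M3*h^3 := by ring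
  · have inner3 : ∀ s ∈ Set.Ico (0:ℝ) h, |deriv F (w+s) + -deriv F (w-s)| ≤ 2*M2*h := by
      intro s hs
      have hs0 : 0 ≤ s := hs.1
      have hsh : s ≤ h := le_of_lt hs.2
      have := mvtAbs (deriv F) lo hi M2 hF1 hM2 (w-s) (w+s)
          (hwmem s hs0 hsh).2 (hwmem s hs0 hsh).1
      have e : |w+s - (w-s)| = 2*s := by
        rw [show w+s-(w-s) = 2*s by ring, abs_of_nonneg (by linarith)]
      rw [e] at this
      calc |deriv F (w+s) + -deriv F (w-s)| = |deriv F (w+s) - deriv F (w-s)| := by ring_nf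
        _ ≤ M2 * (2*s) := this
        _ ≤ 2*M2*h := by nlinarith [hM2nn]
    have hseg3 := segAbs (fun t => F (w+t) + F (w-t))
        (fun t => deriv F (w+t) + -deriv F (w-t)) h (2*M2*h) h0
        (fun t ht => (dplusD F hF w t).add (dminusD F hF w t)) inner3
    have e0 : (fun t => F (w+t) + F (w-t)) 0 = 2*F w := by norm_num; ring
    have eh : (fun t => F (w+t) + F (w-t)) h = F (w+h) + F (w-h) := rfl
    rw [show F (w + 0) + F (w - 0) = 2 * F w from e0] at hseg3
    calc |F (w+h) + F (w-h) - 2*F w| ≤ (2*M2*h)*h := hseg3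
      _ = 2*M2*h^2 := by ring


lemma valSimp (hpR : ℝ) (hne : hpR ≠ 0) (P Q gv : ℝ) :
    ((-(hpR^2)⁻¹ : ℝ) : ℂ) * ((Complex.I * ((P:ℂ)*(P:ℂ) - (Q:ℂ)*(Q:ℂ))/2)
          * (Complex.I * ((P:ℂ)*(P:ℂ) - (Q:ℂ)*(Q:ℂ))/2)
        + (-2) * ((hpR:ℝ):ℂ)^2 * (((P:ℂ)*(P:ℂ) + (Q:ℂ)*(Q:ℂ))/4)) - ((gv:ℝ):ℂ)
    = (((P^2 - Q^2)^2/(4*hpR^2) + (P^2+Q^2)/2 - gv : ℝ) : ℂ) := by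
  have hC : (hpR:ℂ) ≠ 0 := Complex.ofReal_ne_zero.2 hne
  have e1 : (Complex.I * ((P:ℂ)*(P:ℂ) - (Q:ℂ)*(Q:ℂ))/2)
      * (Complex.I * ((P:ℂ)*(P:ℂ) - (Q:ℂ)*(Q:ℂ))/2)
      = -((((P:ℂ)*(P:ℂ) - (Q:ℂ)*(Q:ℂ)))*(((P:ℂ)*(P:ℂ) - (Q:ℂ)*(Q:ℂ))))/4 := by
    linear_combination ((((P:ℂ)*(P:ℂ) - (Q:ℂ)*(Q:ℂ)))*(((P:ℂ)*(P:ℂ) - (Q:ℂ)*(Q:ℂ)))/4) * Complex.I_sq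
  rw [e1]
  push_cast
  field_simp
  ring

set_option maxHeartbeats 2000000 in
/-- For the surface of revolution x = r(z)cos θ, y = r(z)sin θ,
w = z, with X_N = T_N(x), Y_N = T_N(y), Z_N = T_N(w) and G_N the quantization of
(z,θ) ↦ r(z)²(1+r'(z)²), there is a constant C such that for every N and all
(1-based) indices n,m with 4 < n, m ≤ N − 4,
| ( −ħ_N^{−2}([X_N,Y_N]² + [X_N,Z_N]² + [Y_N,Z_N]²) − G_N )_{n,m} | ≤ C/N². -/
theorem quantized_metric_determinant (a b β : ℝ) (hab : a < b) (hβ : 0 < β)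
    (r : ℝ → ℝ) (hr : ContDiff ℝ (⊤ : ℕ∞) r) :
    ∃ C : ℝ, ∀ N : ℕ, 0 < N → ∀ n m : Fin N,
      4 < n.1 + 1 → n.1 + 1 ≤ N - 4 → 4 < m.1 + 1 → m.1 + 1 ≤ N - 4 →
      ‖(((-(((hbar a b β N : ℝ) ^ 2)⁻¹ : ℝ)) •
            (Com (TN a b β N (fun p => (r p.1 * Real.cos p.2 : ℝ)))
                 (TN a b β N (fun p => (r p.1 * Real.sin p.2 : ℝ))) ^ 2
             + Com (TN a b β N (fun p => (r p.1 * Real.cos p.2 : ℝ)))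
                 (TN a b β N (fun p => (p.1 : ℝ))) ^ 2
             + Com (TN a b β N (fun p => (r p.1 * Real.sin p.2 : ℝ)))
                 (TN a b β N (fun p => (p.1 : ℝ))) ^ 2)
          - TN a b β N (fun p => ((r p.1 ^ 2 * (1 + deriv r p.1 ^ 2) : ℝ) : ℂ))) n m)‖
        ≤ C / (N : ℝ) ^ 2 := by
  -- smoothness facts for F = r²
  have hrd : Differentiable ℝ r := hr.differentiable (by simp)
  have hQf : ContDiff ℝ ((⊤:ℕ∞) : WithTop ℕ∞) (fun z => r z ^ 2) := (hr.of_le (by simp)).pow 2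
  have hQfd : Differentiable ℝ (fun z => r z ^ 2) := hQf.differentiable (by simp)
  have hQ1 : ContDiff ℝ ((⊤:ℕ∞) : WithTop ℕ∞) (deriv (fun z => r z ^ 2)) :=
    (contDiff_infty_iff_deriv.1 hQf).2
  have hQ1d : Differentiable ℝ (deriv (fun z => r z ^ 2)) := hQ1.differentiable (by simp)
  have hQ2 : ContDiff ℝ ((⊤:ℕ∞) : WithTop ℕ∞) (deriv (deriv (fun z => r z ^ 2))) :=
    (contDiff_infty_iff_deriv.1 hQ1).2
  have hQ2d : Differentiable ℝ (deriv (deriv (fun z => r z ^ 2))) := hQ2.differentiable (by simp)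
  have hQ3 : ContDiff ℝ ((⊤:ℕ∞) : WithTop ℕ∞) (deriv (deriv (deriv (fun z => r z ^ 2)))) :=
    (contDiff_infty_iff_deriv.1 hQ2).2
  set L := (b - a) * β with hLdef
  have hL : 0 < L := mul_pos (by linarith) hβ
  -- bounds for the derivatives of r² on a fixed compact interval
  obtain ⟨M1, hM1'⟩ := (isCompact_Icc (a := a - L) (b := a + 2*L)).exists_bound_of_continuousOn
      (hQ1.continuous.continuousOn)
  obtain ⟨M2, hM2'⟩ := (isCompact_Icc (a := a - L) (b := a + 2*L)).exists_bound_of_continuousOn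
      (hQ2.continuous.continuousOn)
  obtain ⟨M3, hM3'⟩ := (isCompact_Icc (a := a - L) (b := a + 2*L)).exists_bound_of_continuousOn
      (hQ3.continuous.continuousOn)
  have hM1 : ∀ x ∈ Set.Icc (a-L) (a+2*L), |deriv (fun z => r z ^ 2) x| ≤ M1 :=
    fun x hx => by simpa [Real.norm_eq_abs] using hM1' x hx
  have hM2 : ∀ x ∈ Set.Icc (a-L) (a+2*L), |deriv (deriv (fun z => r z ^ 2)) x| ≤ M2 :=
    fun x hx => by simpa [Real.norm_eq_abs] using hM2' x hx
  have hM3 : ∀ x ∈ Set.Icc (a-L) (a+2*L), |deriv (deriv (deriv (fun z => r z ^ 2))) x| ≤ M3 :=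
    fun x hx => by simpa [Real.norm_eq_abs] using hM3' x hx
  have haK : a ∈ Set.Icc (a-L) (a+2*L) := ⟨by linarith, by linarith⟩
  have hM1nn : 0 ≤ M1 := le_trans (abs_nonneg _) (hM1 a haK)
  have hM2nn : 0 ≤ M2 := le_trans (abs_nonneg _) (hM2 a haK)
  have hM3nn : 0 ≤ M3 := le_trans (abs_nonneg _) (hM3 a haK)
  refine ⟨(M1*M3 + M2) * L^2, ?_⟩
  have hC0 : 0 ≤ (M1*M3 + M2) * L^2 := by positivity
  intro N hN n m hn1 hn2 hm1 hm2
  have hn4 : 4 ≤ n.1 := by omega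
  have hn5 : n.1 + 5 ≤ N := by omega
  have hm4 : 4 ≤ m.1 := by omega
  have hm5 : m.1 + 5 ≤ N := by omega
  have hNpos : (0:ℝ) < N := by exact_mod_cast hN
  set hp := hbar a b β N with hhpdef
  have hhpL : hp = L / N := rfl
  have hhppos : 0 < hp := by rw [hhpL]; positivity
  set X := TN a b β N (fun p => ((r p.1 * Real.cos p.2 : ℝ) : ℂ)) with hXdef
  set Y := TN a b β N (fun p => ((r p.1 * Real.sin p.2 : ℝ) : ℂ)) with hYdef
  set Z := TN a b β N (fun p => ((p.1 : ℝ) : ℂ)) with hZdef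
  set G := TN a b β N (fun p => ((r p.1 ^ 2 * (1 + deriv r p.1 ^ 2) : ℝ) : ℂ)) with hGdef
  have hTN : ∀ (f : ℝ×ℝ→ℂ) (i j : Fin N), TN a b β N f i j
      = fourierMode f ((i.1:ℤ) - (j.1:ℤ)) (zN a b β N (i.1+1) (j.1+1)) := fun f i j => rfl
  -- entry formula for X
  have hXe : ∀ i j : Fin N, X i j = if ((i.1:ℤ) - (j.1:ℤ))^2 = 1
      then ((r (zN a b β N (i.1+1) (j.1+1)) : ℝ):ℂ)/2 else 0 := by
    intro i j
    have hf : ∀ θ:ℝ, (fun p : ℝ×ℝ => ((r p.1 * Real.cos p.2 : ℝ):ℂ))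
          (zN a b β N (i.1+1) (j.1+1), θ)
        = (((r (zN a b β N (i.1+1) (j.1+1)) : ℝ):ℂ)/2) * Complex.exp (Complex.I*((1:ℤ):ℂ)*θ)
          + (((r (zN a b β N (i.1+1) (j.1+1)) : ℝ):ℂ)/2) * Complex.exp (Complex.I*((-1:ℤ):ℂ)*θ) := by
      intro θ; dsimp only; push_cast; rw [cosExp]; ring
    rw [hXdef, hTN, fmGen _ _ 1 (-1) _ _ _ hf]
    by_cases h1 : (1:ℤ) = (i.1:ℤ) - j.1
    · rw [if_pos h1, if_neg (by omega), if_pos (by rw [← h1]; norm_num)]; ring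
    · by_cases h2 : (-1:ℤ) = (i.1:ℤ) - j.1
      · rw [if_neg h1, if_pos h2, if_pos (by rw [← h2]; norm_num)]; ring
      · rw [if_neg h1, if_neg h2,
          if_neg (fun hc => by rcases (int_sq_one _).1 hc with h | h <;> omega)]
        ring
  -- Y in terms of X
  have hYr : ∀ i j : Fin N, Y i j = Complex.I * ((j.1:ℂ) - (i.1:ℂ)) * X i j := by
    intro i j
    have hf : ∀ θ:ℝ, (fun p : ℝ×ℝ => ((r p.1 * Real.sin p.2 : ℝ):ℂ))
          (zN a b β N (i.1+1) (j.1+1), θ)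
        = (-(Complex.I * ((r (zN a b β N (i.1+1) (j.1+1)) : ℝ):ℂ))/2)
            * Complex.exp (Complex.I*((1:ℤ):ℂ)*θ)
          + (Complex.I * ((r (zN a b β N (i.1+1) (j.1+1)) : ℝ):ℂ)/2)
            * Complex.exp (Complex.I*((-1:ℤ):ℂ)*θ) := by
      intro θ; dsimp only; push_cast; rw [sinExp]; ring
    rw [hYdef, hTN, fmGen _ _ 1 (-1) _ _ _ hf, hXe i j]
    by_cases h1 : (1:ℤ) = (i.1:ℤ) - j.1
    · have e : i.1 = j.1 + 1 := by omega
      rw [if_pos h1, if_neg (by omega), if_pos (by rw [← h1]; norm_num), e]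
      push_cast; ring
    · by_cases h2 : (-1:ℤ) = (i.1:ℤ) - j.1
      · have e : j.1 = i.1 + 1 := by omega
        rw [if_neg h1, if_pos h2, if_pos (by rw [← h2]; norm_num), e]
        push_cast; ring
      · rw [if_neg h1, if_neg h2,
          if_neg (fun hc => by rcases (int_sq_one _).1 hc with h | h <;> omega)]
        ring
  -- Z is diagonal
  have hZe : ∀ i j : Fin N, Z i j = if i = j then ((zN a b β N (i.1+1) (j.1+1) : ℝ):ℂ) else 0 := by
    intro i j
    have hf : ∀ θ:ℝ, (fun p:ℝ×ℝ => ((p.1:ℝ):ℂ)) (zN a b β N (i.1+1) (j.1+1), θ)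
        = ((zN a b β N (i.1+1) (j.1+1):ℝ):ℂ) * Complex.exp (Complex.I*((0:ℤ):ℂ)*θ)
          + 0 * Complex.exp (Complex.I*((0:ℤ):ℂ)*θ) := by intro θ; simp
    rw [hZdef, hTN, fmGen _ _ 0 0 _ _ _ hf]
    by_cases h : i = j
    · subst h; simp
    · have hd : (0:ℤ) ≠ (i.1:ℤ) - j.1 := by
        have : i.1 ≠ j.1 := fun hv => h (Fin.ext hv)
        omega
      rw [if_neg hd, if_neg hd, if_neg h]; simp
  -- G is diagonal
  have hGe : ∀ i j : Fin N, G i j = if i = j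
      then ((r (zN a b β N (i.1+1) (j.1+1)) ^ 2
        * (1 + deriv r (zN a b β N (i.1+1) (j.1+1)) ^2) : ℝ):ℂ) else 0 := by
    intro i j
    have hf : ∀ θ:ℝ, (fun p:ℝ×ℝ => ((r p.1 ^ 2 * (1 + deriv r p.1 ^ 2) : ℝ):ℂ))
          (zN a b β N (i.1+1) (j.1+1), θ)
        = ((r (zN a b β N (i.1+1) (j.1+1)) ^ 2
            * (1 + deriv r (zN a b β N (i.1+1) (j.1+1)) ^2) : ℝ):ℂ)
            * Complex.exp (Complex.I*((0:ℤ):ℂ)*θ)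
          + 0 * Complex.exp (Complex.I*((0:ℤ):ℂ)*θ) := by intro θ; simp
    rw [hGdef, hTN, fmGen _ _ 0 0 _ _ _ hf]
    by_cases h : i = j
    · subst h; simp
    · have hd : (0:ℤ) ≠ (i.1:ℤ) - j.1 := by
        have : i.1 ≠ j.1 := fun hv => h (Fin.ext hv)
        omega
      rw [if_neg hd, if_neg hd, if_neg h]; simp
  -- z-values on the diagonal are affine
  have hzdiff : ∀ i j : Fin N, ((zN a b β N (j.1+1) (j.1+1) : ℝ):ℂ)
      - ((zN a b β N (i.1+1) (i.1+1) : ℝ):ℂ) = ((hp:ℝ):ℂ) * ((j.1:ℂ) - (i.1:ℂ)) := by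
    intro i j
    have hzr : (zN a b β N (j.1+1) (j.1+1) : ℝ) - zN a b β N (i.1+1) (i.1+1)
        = hp * ((j.1:ℝ) - i.1) := by
      simp only [zN]
      rw [← hhpdef]
      push_cast
      ring
    calc ((zN a b β N (j.1+1) (j.1+1) : ℝ):ℂ) - ((zN a b β N (i.1+1) (i.1+1) : ℝ):ℂ)
        = (((zN a b β N (j.1+1) (j.1+1) : ℝ) - zN a b β N (i.1+1) (i.1+1) : ℝ) : ℂ) := by
          push_cast; ring
      _ = _ := by rw [hzr]; push_cast; ring
  have hXZ : ∀ i j : Fin N, Com X Z i j = ((hp:ℝ):ℂ) * ((j.1:ℂ) - (i.1:ℂ)) * X i j := by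
    intro i j
    show (X * Z - Z * X) i j = _
    rw [Matrix.sub_apply, Matrix.mul_apply, Matrix.mul_apply]
    simp only [hZe, mul_ite, ite_mul, mul_zero, zero_mul,
      Finset.sum_ite_eq, Finset.sum_ite_eq', Finset.mem_univ, if_true]
    linear_combination (X i j) * hzdiff i j
  have hYZ : ∀ i j : Fin N, Com Y Z i j = ((hp:ℝ):ℂ) * ((j.1:ℂ) - (i.1:ℂ)) * Y i j := by
    intro i j
    show (Y * Z - Z * Y) i j = _
    rw [Matrix.sub_apply, Matrix.mul_apply, Matrix.mul_apply]
    simp only [hZe, mul_ite, ite_mul, mul_zero, zero_mul,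
      Finset.sum_ite_eq, Finset.sum_ite_eq', Finset.mem_univ, if_true]
    linear_combination (Y i j) * hzdiff i j
  -- [X,Y] is diagonal
  have hXY : ∀ i j : Fin N, Com X Y i j
      = if i = j then (∑ k, (X i k * Y k i - Y i k * X k i)) else 0 := by
    intro i j
    show (X * Y - Y * X) i j = _
    rw [Matrix.sub_apply, Matrix.mul_apply, Matrix.mul_apply, ← Finset.sum_sub_distrib]
    by_cases h : i = j
    · subst h; rw [if_pos rfl]
    · rw [if_neg h]
      apply Finset.sum_eq_zero
      intro k _
      rw [hYr i k, hYr k j]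
      by_cases c1 : ((i.1:ℤ) - (k.1:ℤ))^2 = 1
      · by_cases c2 : ((k.1:ℤ) - (j.1:ℤ))^2 = 1
        · have hij : i.1 ≠ j.1 := fun hv => h (Fin.ext hv)
          rcases (int_sq_one _).1 c1 with e1 | e1 <;> rcases (int_sq_one _).1 c2 with e2 | e2
          · have ek : k.1 = j.1 + 1 := by omega
            have ei : i.1 = j.1 + 2 := by omega
            rw [ek, ei]; push_cast; ring
          · omega
          · omega
          · have ek : k.1 = i.1 + 1 := by omega
            have ej : j.1 = i.1 + 2 := by omega
            rw [ek, ej]; push_cast; ring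
        · rw [hXe k j, if_neg c2]; ring
      · rw [hXe i k, if_neg c1]; ring
  -- the sum of the squares of [X,Z] and [Y,Z], at the entry (n,m)
  have hABsum : (Com X Z * Com X Z) n m + (Com Y Z * Com Y Z) n m
      = if n = m then (-2) * ((hp:ℝ):ℂ)^2 * (∑ k, X n k * X k n) else 0 := by
    rw [Matrix.mul_apply, Matrix.mul_apply, ← Finset.sum_add_distrib]
    by_cases h : n = m
    · subst h
      rw [if_pos rfl, Finset.mul_sum]
      apply Finset.sum_congr rfl
      intro k _
      rw [hXZ, hXZ, hYZ, hYZ, hYr n k, hYr k n]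
      by_cases c : ((n.1:ℤ) - (k.1:ℤ))^2 = 1
      · rcases (int_sq_one _).1 c with e | e
        · have ek : n.1 = k.1 + 1 := by omega
          rw [ek]; push_cast
          linear_combination (((hp:ℝ):ℂ)^2 * (X n k * X k n)) * Complex.I_sq
        · have ek : k.1 = n.1 + 1 := by omega
          rw [ek]; push_cast
          linear_combination (((hp:ℝ):ℂ)^2 * (X n k * X k n)) * Complex.I_sq
      · have c' : ¬ ((k.1:ℤ) - (n.1:ℤ))^2 = 1 := fun hc => c (by linear_combination hc)
        rw [hXe n k, if_neg c, hXe k n, if_neg c']; ring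
    · rw [if_neg h]
      apply Finset.sum_eq_zero
      intro k _
      rw [hXZ, hXZ, hYZ, hYZ, hYr n k, hYr k m]
      by_cases c1 : ((n.1:ℤ) - (k.1:ℤ))^2 = 1
      · by_cases c2 : ((k.1:ℤ) - (m.1:ℤ))^2 = 1
        · have hnm : n.1 ≠ m.1 := fun hv => h (Fin.ext hv)
          rcases (int_sq_one _).1 c1 with e1 | e1 <;> rcases (int_sq_one _).1 c2 with e2 | e2
          · have ek : k.1 = m.1 + 1 := by omega
            have en : n.1 = m.1 + 2 := by omega
            rw [ek, en]; push_cast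
            linear_combination (((hp:ℝ):ℂ)^2 * (X n k * X k m)) * Complex.I_sq
          · omega
          · omega
          · have ek : k.1 = n.1 + 1 := by omega
            have em : m.1 = n.1 + 2 := by omega
            rw [ek, em]; push_cast
            linear_combination (((hp:ℝ):ℂ)^2 * (X n k * X k m)) * Complex.I_sq
        · rw [hXe k m, if_neg c2]; ring
      · rw [hXe n k, if_neg c1]; ring
  -- the square of [X,Y], at the entry (n,m)
  have hD1sq : (Com X Y * Com X Y) n m
      = if n = m then (∑ k, (X n k * Y k n - Y n k * X k n))
          * (∑ k, (X n k * Y k n - Y n k * X k n)) else 0 := by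
    rw [Matrix.mul_apply]
    rw [Finset.sum_eq_single n
      (fun k _ hk => by rw [hXY n k, if_neg (fun hh => hk hh.symm), zero_mul])
      (fun hn' => absurd (Finset.mem_univ n) hn')]
    rw [hXY n n, if_pos rfl, hXY n m]
    by_cases h : n = m
    · subst h; rw [if_pos rfl, if_pos rfl]
    · rw [if_neg h, if_neg h, mul_zero]
  -- combine the three squares
  have hsum3 : (Com X Y * Com X Y) n m + (Com X Z * Com X Z) n m
        + (Com Y Z * Com Y Z) n m
      = if n = m then ((∑ k, (X n k * Y k n - Y n k * X k n))
          * (∑ k, (X n k * Y k n - Y n k * X k n))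
          + (-2) * ((hp:ℝ):ℂ)^2 * (∑ k, X n k * X k n)) else 0 := by
    rw [add_assoc, hD1sq, hABsum]
    by_cases h : n = m <;> simp [h]
  rw [pow_two (Com X Y), pow_two (Com X Z), pow_two (Com Y Z)]
  simp only [Matrix.sub_apply, Matrix.add_apply, Matrix.smul_apply, Complex.real_smul]
  rw [hsum3, hGe n m]
  by_cases hnm : n = m
  case neg =>
    rw [if_neg hnm, if_neg hnm]
    simp only [mul_zero, zero_sub, norm_neg, norm_zero]
    exact div_nonneg hC0 (by positivity)
  case pos =>
    subst hnm
    rw [if_pos rfl, if_pos rfl]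
    set w := a + hp * ((n.1:ℝ) + 1) with hwdef
    have ezd : zN a b β N (n.1+1) (n.1+1) = w := by
      simp only [zN]; rw [← hhpdef, hwdef]; push_cast; ring
    have ezm : zN a b β N (n.1+1) (n.1-1+1) = w - hp/2 := by
      rw [show n.1-1+1 = n.1 from by omega]
      simp only [zN]; rw [← hhpdef, hwdef]; push_cast; ring
    have ezm' : zN a b β N (n.1-1+1) (n.1+1) = w - hp/2 := by
      rw [show n.1-1+1 = n.1 from by omega]
      simp only [zN]; rw [← hhpdef, hwdef]; push_cast; ring
    have ezp : zN a b β N (n.1+1) (n.1+1+1) = w + hp/2 := by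
      simp only [zN]; rw [← hhpdef, hwdef]; push_cast; ring
    have ezp' : zN a b β N (n.1+1+1) (n.1+1) = w + hp/2 := by
      simp only [zN]; rw [← hhpdef, hwdef]; push_cast; ring
    have hkm : n.1 - 1 < N := by omega
    have hkp : n.1 + 1 < N := by omega
    have cmm : (((n.1:ℤ)) - (((⟨n.1-1, hkm⟩ : Fin N).1 : ℕ):ℤ))^2 = 1 := by
      rw [show ((n.1:ℤ)) - (((⟨n.1-1, hkm⟩ : Fin N).1 : ℕ):ℤ) = 1 from by
        simp only [Fin.val_mk]; omega]
      norm_num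
    have cmm' : ((((⟨n.1-1, hkm⟩ : Fin N).1 : ℕ):ℤ) - (n.1:ℤ))^2 = 1 := by
      rw [show (((⟨n.1-1, hkm⟩ : Fin N).1 : ℕ):ℤ) - (n.1:ℤ) = -1 from by
        simp only [Fin.val_mk]; omega]
      norm_num
    have cpp : (((n.1:ℤ)) - (((⟨n.1+1, hkp⟩ : Fin N).1 : ℕ):ℤ))^2 = 1 := by
      rw [show ((n.1:ℤ)) - (((⟨n.1+1, hkp⟩ : Fin N).1 : ℕ):ℤ) = -1 from by
        simp only [Fin.val_mk]; omega]
      norm_num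
    have cpp' : ((((⟨n.1+1, hkp⟩ : Fin N).1 : ℕ):ℤ) - (n.1:ℤ))^2 = 1 := by
      rw [show (((⟨n.1+1, hkp⟩ : Fin N).1 : ℕ):ℤ) - (n.1:ℤ) = 1 from by
        simp only [Fin.val_mk]; omega]
      norm_num
    have eXm : X n ⟨n.1-1, hkm⟩ = ((r (w - hp/2) : ℝ):ℂ)/2 := by
      rw [hXe, if_pos cmm]
      simp only [Fin.val_mk]
      rw [ezm]
    have eXm' : X ⟨n.1-1, hkm⟩ n = ((r (w - hp/2) : ℝ):ℂ)/2 := by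
      rw [hXe, if_pos cmm']
      simp only [Fin.val_mk]
      rw [ezm']
    have eXp : X n ⟨n.1+1, hkp⟩ = ((r (w + hp/2) : ℝ):ℂ)/2 := by
      rw [hXe, if_pos cpp]
      simp only [Fin.val_mk]
      rw [ezp]
    have eXp' : X ⟨n.1+1, hkp⟩ n = ((r (w + hp/2) : ℝ):ℂ)/2 := by
      rw [hXe, if_pos cpp']
      simp only [Fin.val_mk]
      rw [ezp']
    have cv1 : (((⟨n.1-1, hkm⟩ : Fin N).1 : ℕ):ℂ) = (n.1:ℂ) - 1 := by
      simp only [Fin.val_mk]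
      rw [Nat.cast_sub (by omega : 1 ≤ n.1)]
      norm_num
    have cv2 : (((⟨n.1+1, hkp⟩ : Fin N).1 : ℕ):ℂ) = (n.1:ℂ) + 1 := by
      simp only [Fin.val_mk]
      push_cast
      ring
    have eSS : (∑ k, (X n k * Y k n - Y n k * X k n))
        = Complex.I * (((r (w - hp/2) : ℝ):ℂ) * ((r (w - hp/2) : ℝ):ℂ)
          - ((r (w + hp/2) : ℝ):ℂ) * ((r (w + hp/2) : ℝ):ℂ))/2 := by
      rw [two_point _ n (by omega) hkp (fun k hk1 hk2 => by
        have c : ¬ ((n.1:ℤ) - (k.1:ℤ))^2 = 1 := fun hc => by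
          rcases (int_sq_one _).1 hc with e|e <;> omega
        have c' : ¬ ((k.1:ℤ) - (n.1:ℤ))^2 = 1 := fun hc => c (by linear_combination hc)
        rw [hYr n k, hYr k n, hXe n k, hXe k n, if_neg c, if_neg c']
        ring)]
      rw [hYr ⟨n.1-1, hkm⟩ n, hYr n ⟨n.1-1, hkm⟩, hYr ⟨n.1+1, hkp⟩ n, hYr n ⟨n.1+1, hkp⟩,
        eXm, eXm', eXp, eXp', cv1, cv2]
      ring
    have eTT : (∑ k, X n k * X k n)
        = (((r (w - hp/2) : ℝ):ℂ) * ((r (w - hp/2) : ℝ):ℂ)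
          + ((r (w + hp/2) : ℝ):ℂ) * ((r (w + hp/2) : ℝ):ℂ))/4 := by
      rw [two_point _ n (by omega) hkp (fun k hk1 hk2 => by
        have c : ¬ ((n.1:ℤ) - (k.1:ℤ))^2 = 1 := fun hc => by
          rcases (int_sq_one _).1 hc with e|e <;> omega
        rw [hXe n k, if_neg c, zero_mul])]
      rw [eXm, eXm', eXp, eXp']
      ring
    rw [ezd, eSS, eTT,
      valSimp hp (ne_of_gt hhppos) (r (w - hp/2)) (r (w + hp/2))
        (r w ^ 2 * (1 + deriv r w ^ 2)), Complex.norm_real, Real.norm_eq_abs]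
    -- now a purely real estimate
    have hwlo : a ≤ w := by
      rw [hwdef]
      nlinarith [hhppos, (show (0:ℝ) ≤ (n.1:ℝ) from Nat.cast_nonneg _)]
    have hwhi : w ≤ a + L := by
      rw [hwdef]
      have h1 : ((n.1:ℝ) + 1) ≤ (N:ℝ) := by exact_mod_cast (by omega : n.1 + 1 ≤ N)
      have h2 : hp * ((n.1:ℝ)+1) ≤ hp * N := by nlinarith [hhppos]
      have h3 : hp * N = L := by rw [hhpL]; field_simp
      linarith
    have hhalf0 : (0:ℝ) ≤ hp/2 := by linarith
    have hhalfL : hp/2 ≤ L := by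
      have h1 : L/(N:ℝ) ≤ L := div_le_self hL.le (by exact_mod_cast hN)
      rw [hhpL]; linarith
    obtain ⟨b1, b2, b3⟩ := taylorBounds (fun z => r z^2) (a-L) (a+2*L) M1 M2 M3
      hQfd hQ1d hQ2d hM1 hM2 hM3 w (hp/2) hhalf0 (by linarith) (by linarith)
    try dsimp only at b1 b2 b3
    have hD1w : deriv (fun z => r z^2) w = 2 * r w * deriv r w := by
      have := ((hrd w).hasDerivAt.pow 2).deriv
      rw [show (fun z => r z^2) = r^2 from rfl]
      simpa using this
    have hDwK : |deriv (fun z => r z^2) w| ≤ M1 := hM1 w ⟨by linarith, by linarith⟩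
    have hpne : hp ≠ 0 := ne_of_gt hhppos
    have hV : (r (w-hp/2)^2 - r (w+hp/2)^2)^2/(4*hp^2) + (r (w-hp/2)^2 + r (w+hp/2)^2)/2
          - r w^2*(1+deriv r w^2)
        = (r (w+hp/2)^2 - r (w-hp/2)^2 - 2*(hp/2)*deriv (fun z => r z^2) w)
            * (r (w+hp/2)^2 - r (w-hp/2)^2 + 2*(hp/2)*deriv (fun z => r z^2) w)
            /(16*(hp/2)^2)
          + (r (w+hp/2)^2 + r (w-hp/2)^2 - 2*r w^2)/2 := by
      rw [hD1w]
      field_simp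
      ring
    rw [hV]
    have t2 : |r (w+hp/2)^2 - r (w-hp/2)^2 + 2*(hp/2)*deriv (fun z => r z^2) w|
        ≤ 4*M1*(hp/2) := by
      calc |r (w+hp/2)^2 - r (w-hp/2)^2 + 2*(hp/2)*deriv (fun z => r z^2) w|
          ≤ |r (w+hp/2)^2 - r (w-hp/2)^2| + |2*(hp/2)*deriv (fun z => r z^2) w| :=
            abs_add_le _ _
        _ ≤ 2*M1*(hp/2) + 2*(hp/2)*M1 := by
            refine add_le_add b1 ?_
            rw [abs_mul, abs_of_nonneg (by linarith : (0:ℝ) ≤ 2*(hp/2))]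
            nlinarith [hDwK, abs_nonneg (deriv (fun z => r z^2) w), hhppos]
        _ = 4*M1*(hp/2) := by ring
    have hnum : |r (w+hp/2)^2 - r (w-hp/2)^2 - 2*(hp/2)*deriv (fun z => r z^2) w|
          * |r (w+hp/2)^2 - r (w-hp/2)^2 + 2*(hp/2)*deriv (fun z => r z^2) w|
        ≤ (2*M3*(hp/2)^3) * (4*M1*(hp/2)) := by
      refine mul_le_mul b2 t2 (abs_nonneg _) ?_
      have h3 : (0:ℝ) ≤ (hp/2)^3 := by positivity
      nlinarith [hM3nn]
    calc |(r (w+hp/2)^2 - r (w-hp/2)^2 - 2*(hp/2)*deriv (fun z => r z^2) w)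
            * (r (w+hp/2)^2 - r (w-hp/2)^2 + 2*(hp/2)*deriv (fun z => r z^2) w)
            /(16*(hp/2)^2)
          + (r (w+hp/2)^2 + r (w-hp/2)^2 - 2*r w^2)/2|
        ≤ |(r (w+hp/2)^2 - r (w-hp/2)^2 - 2*(hp/2)*deriv (fun z => r z^2) w)
            * (r (w+hp/2)^2 - r (w-hp/2)^2 + 2*(hp/2)*deriv (fun z => r z^2) w)
            /(16*(hp/2)^2)|
          + |(r (w+hp/2)^2 + r (w-hp/2)^2 - 2*r w^2)/2| := abs_add_le _ _
      _ ≤ (2*M3*(hp/2)^3) * (4*M1*(hp/2)) / (16*(hp/2)^2) + (2*M2*(hp/2)^2)/2 := by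
          refine add_le_add ?_ ?_
          · rw [abs_div, abs_mul, abs_of_nonneg (show (0:ℝ) ≤ 16*(hp/2)^2 by positivity)]
            exact div_le_div_of_nonneg_right hnum (by positivity)
          · rw [abs_div, abs_two]
            exact div_le_div_of_nonneg_right b3 (by norm_num)
      _ = (M1*M3/2 + M2) * (hp/2)^2 := by field_simp; ring
      _ ≤ (M1*M3 + M2) * (hp/2)^2 := by nlinarith [sq_nonneg (hp/2), mul_nonneg hM1nn hM3nn]
      _ = (M1*M3 + M2) * (L^2/(4*(N:ℝ)^2)) := by rw [hhpL]; ring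
      _ ≤ (M1*M3 + M2) * L^2 / (N:ℝ)^2 := by
          rw [mul_div_assoc]
          refine mul_le_mul_of_nonneg_left ?_ (by positivity)
          refine div_le_div_of_nonneg_left (by positivity) (by positivity) ?_
          nlinarith [hNpos]
end
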